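/- arXiv:2108.04596 — 5 statements merged into one kernel-verified Lean document; each statement's English description precedes it below -/
import Mathlib

section
/- Let n ≥ 1 and let (F, Σₙ, ⬠) be an (n+2)-angulated Krull–Schmidt category. Let A ⊆ F be a full, additive, n-extension closed subcategory with Hom_F(ΣₙA, A) = 0. Then there is an isomorphism Hom_F(A_{n+1}, ΣₙA₀) ≅ YExtⁿ_{(A,E_A)}(A_{n+1}, A₀) for all A₀, A_{n+1} ∈ A, which is natural in both arguments and bilinear, i.e. an isomorphism of functors A × Aᵒᵖ → Ab between Hom_F(−, Σₙ(−)) and YExtⁿ_{(A,E_A)}(−, −). -/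
open CategoryTheory CategoryTheory.Limits

universe v u

namespace NAng

instance (priority := 100) hasBinBiprod (C : Type u) [Category.{v} C] [Preadditive C]
    [HasFiniteBiproducts C] : HasBinaryBiproducts C :=
  hasBinaryBiproducts_of_finite_biproducts C

variable {C : Type u} [Category.{v} C] [Preadditive C] [HasFiniteBiproducts C]

/-- A morphism `f : X ⟶ Y` lies in the radical if for every `g : Y ⟶ X` the
endomorphism `𝟙 X - f ≫ g` is invertible. -/
def InRad {X Y : C} (f : X ⟶ Y) : Prop :=
  ∀ g : Y ⟶ X, IsIso (𝟙 X - f ≫ g)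

/-- A Krull–Schmidt category: every object is a finite direct sum of objects having
local endomorphism rings. -/
def KrullSchmidt (C : Type u) [Category.{v} C] [Preadditive C] [HasFiniteBiproducts C] : Prop :=
  ∀ X : C, ∃ (k : ℕ) (Y : Fin k → C),
    Nonempty (X ≅ ⨁ Y) ∧ ∀ i, IsLocalRing (End (Y i))

/-- `Z ∈ add M`: `Z` is a retract of a finite direct sum of copies of `M`. -/
def InAdd (M Z : C) : Prop :=
  ∃ (k : ℕ) (ι : Z ⟶ ⨁ fun _ : Fin k => M) (π : (⨁ fun _ : Fin k => M) ⟶ Z),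
    ι ≫ π = 𝟙 Z

variable (n : ℕ) (S : C ⥤ C)

/-- An "unrolled" candidate `(n+2)`-angle: an infinite complex which is
`(n+2)`-periodic up to `S` and the sign `(-1)ⁿ`.  The (n+2)-angle
`X₀ → X₁ → ⋯ → X_{n+1} → S X₀` is recorded by the objects `X 0, …, X (n+1)`,
the maps `d 0, …, d n`, and the connecting morphism `d (n+1) ≫ (σ 0).hom`. -/
structure Cand where
  X : ℕ → C
  d : ∀ i, X i ⟶ X (i + 1)
  σ : ∀ i, X (n + 2 + i) ≅ S.obj (X i)
  compat : ∀ i, d (n + 2 + i) =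
    (σ i).hom ≫ (((-1 : ℤ) ^ n) • S.map (d i)) ≫ (σ (i + 1)).inv

/-- A morphism of candidate `(n+2)`-angles. -/
structure CandHom (A B : Cand n S) where
  φ : ∀ i, A.X i ⟶ B.X i
  comm : ∀ i, A.d i ≫ φ (i + 1) = φ i ≫ B.d i
  shift : ∀ i, φ (n + 2 + i) = (A.σ i).hom ≫ S.map (φ i) ≫ (B.σ i).inv

variable {n S}

/-- Rotation of a candidate `(n+2)`-angle. -/
def Cand.rot (A : Cand n S) : Cand n S where
  X i := A.X (i + 1)
  d i := A.d (i + 1)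
  σ i := A.σ (i + 1)
  compat i := A.compat (i + 1)

/-- The connecting morphism `X_{n+1} ⟶ S X₀` of a candidate `(n+2)`-angle. -/
def Cand.conn (A : Cand n S) : A.X (n + 1) ⟶ S.obj (A.X 0) :=
  A.d (n + 1) ≫ (A.σ 0).hom

variable (n S)

instance (priority := 100) preservesBinaryBiproductsOfAdditive {D : Type u} [Category.{v} D]
    [Preadditive D] (F : C ⥤ D) [F.Additive] : PreservesBinaryBiproducts F :=
  preservesBinaryBiproducts_of_preservesBiproducts F

/-- The differentials of the mapping cone of a morphism of candidate `(n+2)`-angles. -/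
noncomputable def coneD {A B : Cand n S} (Φ : CandHom n S A B) (j : ℕ) :
    (A.X (j + 1)) ⊞ (B.X j) ⟶ (A.X (j + 2)) ⊞ (B.X (j + 1)) :=
  biprod.fst ≫ (-(A.d (j + 1))) ≫ biprod.inl +
  biprod.fst ≫ Φ.φ (j + 1) ≫ biprod.inr +
  biprod.snd ≫ B.d j ≫ biprod.inr

/-- The periodicity isomorphisms of the mapping cone. -/
noncomputable def coneSigma [S.Additive] (A B : Cand n S) (j : ℕ) :
    (A.X (n + 2 + j + 1)) ⊞ (B.X (n + 2 + j)) ⟶ S.obj ((A.X (j + 1)) ⊞ (B.X j)) :=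
  biprod.map (((-1 : ℤ) ^ n) • (A.σ (j + 1)).hom) ((B.σ j).hom) ≫
    (S.mapBiprod (A.X (j + 1)) (B.X j)).inv

/-- A pre-`(n+2)`-angulated structure: a class of `(n+2)`-angles satisfying the
axioms (F1), (F2) and (F3) of Geiss–Keller–Oppermann. -/
structure PreAngulation where
  angles : Set (Cand n S)
  /-- (F1) closure under direct summands (hence under isomorphisms). -/
  retract_mem : ∀ {A B : Cand n S}, B ∈ angles →
    ∀ (ι : CandHom n S A B) (π : CandHom n S B A),
      (∀ i, ι.φ i ≫ π.φ i = 𝟙 (A.X i)) → A ∈ angles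
  /-- (F1) closure under direct sums. -/
  sum_mem : ∀ {A B T : Cand n S}, A ∈ angles → B ∈ angles →
    ∀ (ιA : CandHom n S A T) (ιB : CandHom n S B T)
      (πA : CandHom n S T A) (πB : CandHom n S T B),
      (∀ i, ιA.φ i ≫ πA.φ i = 𝟙 (A.X i)) →
      (∀ i, ιB.φ i ≫ πB.φ i = 𝟙 (B.X i)) →
      (∀ i, ιA.φ i ≫ πB.φ i = 0) →
      (∀ i, ιB.φ i ≫ πA.φ i = 0) →
      (∀ i, πA.φ i ≫ ιA.φ i + πB.φ i ≫ ιB.φ i = 𝟙 (T.X i)) →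
      T ∈ angles
  /-- (F1) trivial `(n+2)`-angles belong to the class. -/
  triv_mem : ∀ T : Cand n S, IsIso (T.d 0) →
    (∀ j, 2 ≤ j → j ≤ n + 1 → IsZero (T.X j)) → T ∈ angles
  /-- (F1) every morphism is the first morphism of some `(n+2)`-angle. -/
  complete : ∀ {X₀ X₁ : C} (f : X₀ ⟶ X₁),
    ∃ A ∈ angles, ∃ (e₀ : Cand.X A 0 ≅ X₀) (e₁ : Cand.X A 1 ≅ X₁),
      Cand.d A 0 = e₀.hom ≫ f ≫ e₁.inv
  /-- (F2) a candidate is an `(n+2)`-angle iff its rotation is. -/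
  rot_mem : ∀ A : Cand n S, A ∈ angles ↔ A.rot ∈ angles
  /-- (F3) completion of commutative squares to morphisms of `(n+2)`-angles. -/
  ext_hom : ∀ {A B : Cand n S}, A ∈ angles → B ∈ angles →
    ∀ (φ₀ : Cand.X A 0 ⟶ Cand.X B 0) (φ₁ : Cand.X A 1 ⟶ Cand.X B 1),
      Cand.d A 0 ≫ φ₁ = φ₀ ≫ Cand.d B 0 →
      ∃ Φ : CandHom n S A B, Φ.φ 0 = φ₀ ∧ Φ.φ 1 = φ₁

/-- An `(n+2)`-angulated structure: a pre-`(n+2)`-angulated structure satisfying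
moreover the higher octahedral axiom, in the "good morphism"/mapping cone form of
Bergh–Thaule (equivalent to (F4) and to (N4*)). -/
structure Angulation [S.Additive] extends PreAngulation n S where
  octa : ∀ {A B : Cand n S}, A ∈ angles → B ∈ angles →
    ∀ (φ₀ : Cand.X A 0 ⟶ Cand.X B 0) (φ₁ : Cand.X A 1 ⟶ Cand.X B 1),
      Cand.d A 0 ≫ φ₁ = φ₀ ≫ Cand.d B 0 →
      ∃ Φ : CandHom n S A B, Φ.φ 0 = φ₀ ∧ Φ.φ 1 = φ₁ ∧
        ∃ T ∈ angles, ∃ e : ∀ j, Cand.X T j ≅ (Cand.X A (j + 1)) ⊞ (Cand.X B j),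
          (∀ j, Cand.d T j = (e j).hom ≫ coneD n S Φ j ≫ (e (j + 1)).inv) ∧
          (∀ j, (Cand.σ T j).hom =
            (e (n + 2 + j)).hom ≫ coneSigma n S A B j ≫ S.map (e j).inv)

/-- A full subcategory (given by a predicate on objects) is additive if it contains
the zero objects and is closed under binary direct sums and direct summands. -/
def AddClosed (P : C → Prop) : Prop :=
  (∀ X : C, IsZero X → P X) ∧
  (∀ X Y : C, P X → P Y → P (X ⊞ Y)) ∧
  (∀ X Y : C, P Y → ∀ (i : X ⟶ Y) (r : Y ⟶ X), i ≫ r = 𝟙 X → P X)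

/-- The subcategory `P` is `n`-extension closed with respect to the class `ang` of
`(n+2)`-angles. -/
def ExtClosed (P : C → Prop) (ang : Set (Cand n S)) : Prop :=
  ∀ {A₀ Atop : C}, P A₀ → P Atop → ∀ f : Atop ⟶ S.obj A₀,
    ∃ W ∈ ang, ∃ (e₀ : Cand.X W 0 ≅ A₀) (etop : Cand.X W (n + 1) ≅ Atop),
      (∀ j, 1 ≤ j → j ≤ n → P (Cand.X W j)) ∧
      Cand.conn W = etop.hom ≫ f ≫ S.map e₀.inv

/-- The candidate `(n+2)`-angle `W` matches the finite complex `(X, d)` in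
positions `0, …, n+1`. -/
def Matches (W : Cand n S) (X : ℕ → C) (d : ∀ i, X i ⟶ X (i + 1)) : Prop :=
  ∃ e : ∀ j, j ≤ n + 1 → (Cand.X W j ≅ X j),
    ∀ j (h : j + 1 ≤ n + 1),
      Cand.d W j = (e j (Nat.le_of_succ_le h)).hom ≫ d j ≫ (e (j + 1) h).inv

/-- `(X, d)` is an `𝒜`-conflation: a complex with terms in `P` which can be
completed to an `(n+2)`-angle. -/
def IsConflation (P : C → Prop) (ang : Set (Cand n S))
    (X : ℕ → C) (d : ∀ i, X i ⟶ X (i + 1)) : Prop :=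
  (∀ j, j ≤ n + 1 → P (X j)) ∧ ∃ W ∈ ang, Matches n S W X d

/-- An `𝒜`-inflation: a morphism in position `0` of some `𝒜`-conflation. -/
def IsInflation (P : C → Prop) (ang : Set (Cand n S)) {X₀ X₁ : C} (f : X₀ ⟶ X₁) : Prop :=
  ∃ (X : ℕ → C) (d : ∀ i, X i ⟶ X (i + 1)), IsConflation n S P ang X d ∧
    ∃ (e₀ : X 0 ≅ X₀) (e₁ : X 1 ≅ X₁), d 0 = e₀.hom ≫ f ≫ e₁.inv

/-- An `𝒜`-deflation: a morphism in position `n` of some `𝒜`-conflation. -/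
def IsDeflation (P : C → Prop) (ang : Set (Cand n S)) {Y₀ Y₁ : C} (f : Y₀ ⟶ Y₁) : Prop :=
  ∃ (X : ℕ → C) (d : ∀ i, X i ⟶ X (i + 1)), IsConflation n S P ang X d ∧
    ∃ (e₀ : X n ≅ Y₀) (e₁ : X (n + 1) ≅ Y₁), d n = e₀.hom ≫ f ≫ e₁.inv

variable {n S}

end NAng

namespace NAng

variable {C : Type u} [Category.{v} C] [Preadditive C] [HasFiniteBiproducts C]

/-- `g` is a weak cokernel of `f` (in the ambient category). -/
def IsWeakCokernel {X Y Z : C} (f : X ⟶ Y) (g : Y ⟶ Z) : Prop :=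
  f ≫ g = 0 ∧ ∀ (W : C) (h : Y ⟶ W), f ≫ h = 0 → ∃ k : Z ⟶ W, h = g ≫ k

/-- `f` is a weak kernel of `g` (in the ambient category). -/
def IsWeakKernel {X Y Z : C} (f : X ⟶ Y) (g : Y ⟶ Z) : Prop :=
  f ≫ g = 0 ∧ ∀ (W : C) (h : W ⟶ Y), h ≫ g = 0 → ∃ k : W ⟶ X, h = k ≫ f

/-- `g` is a weak cokernel of `f` in the full subcategory `P`. -/
def WeakCokernelIn (P : C → Prop) {X Y Z : C} (f : X ⟶ Y) (g : Y ⟶ Z) : Prop :=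
  f ≫ g = 0 ∧ ∀ (W : C), P W → ∀ h : Y ⟶ W, f ≫ h = 0 → ∃ k : Z ⟶ W, h = g ≫ k

/-- `f` is a weak kernel of `g` in the full subcategory `P`. -/
def WeakKernelIn (P : C → Prop) {X Y Z : C} (f : X ⟶ Y) (g : Y ⟶ Z) : Prop :=
  f ≫ g = 0 ∧ ∀ (W : C), P W → ∀ h : W ⟶ Y, h ≫ g = 0 → ∃ k : W ⟶ X, h = k ≫ f

/-- `f` is a monomorphism in the full subcategory `P`. -/
def MonoIn (P : C → Prop) {X Y : C} (f : X ⟶ Y) : Prop :=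
  ∀ (W : C), P W → ∀ a b : W ⟶ X, a ≫ f = b ≫ f → a = b

/-- `f` is an epimorphism in the full subcategory `P`. -/
def EpiIn (P : C → Prop) {X Y : C} (f : X ⟶ Y) : Prop :=
  ∀ (W : C), P W → ∀ a b : Y ⟶ W, f ≫ a = f ≫ b → a = b

variable (n : ℕ)

/-- `(X, d)` (positions `0, …, n+1`) is an `n`-exact sequence in the full additive
subcategory `P`. -/
def IsNExact (P : C → Prop) (X : ℕ → C) (d : ∀ i, X i ⟶ X (i + 1)) : Prop :=
  (∀ j, j ≤ n + 1 → P (X j)) ∧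
  MonoIn P (d 0) ∧ EpiIn P (d n) ∧
  (∀ i, i < n → WeakCokernelIn P (d i) (d (i + 1))) ∧
  (∀ i, i < n → WeakKernelIn P (d i) (d (i + 1)))

/-- An `n`-pushout diagram in the sense of Jasso, of the rows
`X 0 → ⋯ → X n` and `Y 0 → ⋯ → Y n` along the vertical morphisms `φ`. -/
def IsNPushout (P : C → Prop) (X : ℕ → C) (dX : ∀ i, X i ⟶ X (i + 1))
    (Y : ℕ → C) (dY : ∀ i, Y i ⟶ Y (i + 1)) (φ : ∀ k, X k ⟶ Y k) : Prop :=
  (∀ k, k < n → dX k ≫ φ (k + 1) = φ k ≫ dY k) ∧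
  ∃ (Q : ℕ → C) (dQ : ∀ i, Q i ⟶ Q (i + 1)) (α₀ : Q 0 ≅ X 0)
    (α : ∀ k, 1 ≤ k → k ≤ n → (Q k ≅ (X k) ⊞ (Y (k - 1)))) (αtop : Q (n + 1) ≅ Y n),
    (∀ h : 1 ≤ n,
      dQ 0 = α₀.hom ≫ biprod.lift (-(dX 0)) (φ 0) ≫ (α 1 le_rfl h).inv) ∧
    (∀ j, (h : j + 2 ≤ n) →
      dQ (j + 1) = (α (j + 1) (by omega) (by omega)).hom ≫
        (biprod.fst ≫ (-(dX (j + 1))) ≫ biprod.inl +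
         biprod.fst ≫ φ (j + 1) ≫ biprod.inr +
         biprod.snd ≫ dY j ≫ biprod.inr) ≫ (α (j + 2) (by omega) h).inv) ∧
    (∀ j, (h : j + 1 = n) →
      dQ (j + 1) = (α (j + 1) (by omega) (by omega)).hom ≫
        biprod.desc (φ (j + 1)) (dY j) ≫ eqToHom (by rw [h]) ≫ αtop.inv ≫
          eqToHom (by rw [h])) ∧
    (∀ k, k < n → WeakCokernelIn P (dQ k) (dQ (k + 1)))

/-- An `n`-pullback diagram in the sense of Jasso, of the rows
`X 1 → ⋯ → X (n+1)` and `Y 1 → ⋯ → Y (n+1)` along the vertical morphisms `ψ`. -/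
def IsNPullback (P : C → Prop) (X : ℕ → C) (dX : ∀ i, X i ⟶ X (i + 1))
    (Y : ℕ → C) (dY : ∀ i, Y i ⟶ Y (i + 1)) (ψ : ∀ k, Y k ⟶ X k) : Prop :=
  (∀ k, 1 ≤ k → k ≤ n → dY k ≫ ψ (k + 1) = ψ k ≫ dX k) ∧
  ∃ (Q : ℕ → C) (dQ : ∀ i, Q i ⟶ Q (i + 1)) (α₀ : Q 0 ≅ Y 1)
    (α : ∀ k, 1 ≤ k → k ≤ n → (Q k ≅ (Y (k + 1)) ⊞ (X k))) (αtop : Q (n + 1) ≅ X (n + 1)),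
    (∀ h : 1 ≤ n,
      dQ 0 = α₀.hom ≫ biprod.lift (-(dY 1)) (ψ 1) ≫ (α 1 le_rfl h).inv) ∧
    (∀ k, (h1 : 1 ≤ k) → (h : k + 1 ≤ n) →
      dQ k = (α k h1 (by omega)).hom ≫
        (biprod.fst ≫ (-(dY (k + 1))) ≫ biprod.inl +
         biprod.fst ≫ ψ (k + 1) ≫ biprod.inr +
         biprod.snd ≫ dX k ≫ biprod.inr) ≫ (α (k + 1) (by omega) h).inv) ∧
    (∀ h : 1 ≤ n,
      dQ n = (α n h le_rfl).hom ≫ biprod.desc (ψ (n + 1)) (dX n) ≫ αtop.inv) ∧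
    (∀ k, k < n → WeakKernelIn P (dQ k) (dQ (k + 1)))

end NAng

namespace NAng

variable {C : Type u} [Category.{v} C] [Preadditive C] [HasFiniteBiproducts C]
variable (n : ℕ) (S : C ⥤ C) (P : C → Prop) (ang : Set (Cand n S))

/-- An `A`-conflation regarded as an `n`-extension of `Atop` by `A₀`. -/
structure ExtSeq (A₀ Atop : C) where
  X : ℕ → C
  d : ∀ i, X i ⟶ X (i + 1)
  confl : IsConflation n S P ang X d
  e₀ : X 0 ≅ A₀
  etop : X (n + 1) ≅ Atop

/-- The relation generating the equivalence of `n`-extensions: a morphism of complexes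
which is the identity on the end terms `A₀` and `Atop`. -/
def ExtRel {A₀ Atop : C} (E F : ExtSeq n S P ang A₀ Atop) : Prop :=
  ∃ φ : ∀ j, E.X j ⟶ F.X j,
    (∀ j, j ≤ n → E.d j ≫ φ (j + 1) = φ j ≫ F.d j) ∧
    φ 0 = E.e₀.hom ≫ F.e₀.inv ∧ φ (n + 1) = E.etop.hom ≫ F.etop.inv

/-- The `n`-Yoneda extension classes: `A`-conflations from `A₀` to `Atop` modulo the
equivalence relation generated by `ExtRel`. -/
def YExt (A₀ Atop : C) := Quot (ExtRel n S P ang (A₀ := A₀) (Atop := Atop))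

/-- `E` realizes `f : Atop ⟶ Σₙ A₀`, i.e. `E` is obtained from an `(n+2)`-angle with
connecting morphism `f`. -/
def Realizes {A₀ Atop : C} (E : ExtSeq n S P ang A₀ Atop) (f : Atop ⟶ S.obj A₀) : Prop :=
  ∃ W ∈ ang, ∃ e : ∀ j, j ≤ n + 1 → (Cand.X W j ≅ E.X j),
    (∀ j (h : j + 1 ≤ n + 1),
      Cand.d W j = (e j (Nat.le_of_succ_le h)).hom ≫ E.d j ≫ (e (j + 1) h).inv) ∧
    Cand.conn W = (e (n + 1) le_rfl).hom ≫ E.etop.hom ≫ f ≫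
      S.map (E.e₀.inv ≫ (e 0 (Nat.zero_le _)).inv)

end NAng

/-! Every `A`-conflation completes to an `(n+2)`-angle, and its connecting morphism gives the
inverse map. It is well defined because connecting morphisms are natural along ladders between
`(n+2)`-angles with end terms in `A`: by (F3) and the weak cokernel property of `(n+2)`-angles, such
a ladder agrees with a morphism of `(n+2)`-angles up to a homotopy whose last component lies in
`Hom(Σₙ A₀, A'_{n+1}) = 0`. Conversely, two conflations realizing the same morphism are linked by
the morphism of `(n+2)`-angles that (F3), applied in the rotated position `n + 1`, provides. -/

namespace NAng

variable {C : Type u} [Category.{v} C]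

section TrivialObjects

open ZeroObject

variable [HasZeroObject C] (n : ℕ) (S : C ⥤ C)

/-- The objects of the trivial `(n+2)`-angle `Z = Z → 0 → ⋯ → 0 → S Z`, unrolled. -/
noncomputable def trivX (Z : C) (i : ℕ) : C :=
  S.obj^[i / (n + 2)] (if i % (n + 2) ≤ 1 then Z else 0)

lemma trivX_add_period (Z : C) (i : ℕ) :
    trivX n S Z (n + 2 + i) = S.obj (trivX n S Z i) := by
  rw [trivX, trivX, Nat.add_mod_left, Nat.add_div_left _ (by omega),
    Function.iterate_succ_apply']

lemma trivX_succ_of_mod_eq_zero (Z : C) {i : ℕ} (h : i % (n + 2) = 0) :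
    trivX n S Z i = trivX n S Z (i + 1) := by
  obtain ⟨q, rfl⟩ := Nat.dvd_of_mod_eq_zero h
  rw [trivX, trivX, Nat.mul_add_mod, Nat.mul_add_div (by omega), h,
    Nat.mod_eq_of_lt (show 1 < n + 2 by omega), Nat.div_eq_of_lt (show 1 < n + 2 by omega)]
  simp

lemma trivX_of_lt (Z : C) {i : ℕ} (h : i < n + 2) :
    trivX n S Z i = if i ≤ 1 then Z else 0 := by
  rw [trivX, Nat.mod_eq_of_lt h, Nat.div_eq_of_lt h, Function.iterate_zero_apply]

end TrivialObjects

variable [Preadditive C]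

section Periodicity

variable {n : ℕ} {S : C ⥤ C}

lemma Cand.d_add_period_comp (A : Cand n S) (i : ℕ) :
    A.d (n + 2 + i) ≫ (A.σ (i + 1)).hom = (A.σ i).hom ≫ (((-1 : ℤ) ^ n) • S.map (A.d i)) := by
  simp [A.compat i]

lemma Cand.map_d (A : Cand n S) (i : ℕ) :
    S.map (A.d i) = ((-1 : ℤ) ^ n) • ((A.σ i).inv ≫ A.d (n + 2 + i) ≫ (A.σ (i + 1)).hom) := by
  simp [A.compat i, smul_smul, ← pow_add, ← two_mul, pow_mul]

end Periodicity

section TrivialAngle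

open ZeroObject

variable [HasZeroObject C] (n : ℕ) (S : C ⥤ C)

/-- The sign makes the unrolled complex `(-1)ⁿ`-periodic, as `Cand` requires. -/
noncomputable def trivD (Z : C) (i : ℕ) : trivX n S Z i ⟶ trivX n S Z (i + 1) :=
  if h : i % (n + 2) = 0 then
    ((-1 : ℤ) ^ (n * (i / (n + 2)))) • eqToHom (trivX_succ_of_mod_eq_zero n S Z h)
  else 0

noncomputable def trivCand [S.Additive] (Z : C) : Cand n S where
  X := trivX n S Z
  d := trivD n S Z
  σ i := eqToIso (trivX_add_period n S Z i)
  compat i := by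
    by_cases h : i % (n + 2) = 0
    · have h' : (n + 2 + i) % (n + 2) = 0 := by rw [Nat.add_mod_left, h]
      rw [trivD, trivD, dif_pos h, dif_pos h', Functor.map_zsmul, eqToHom_map]
      simp only [eqToIso.hom, eqToIso.inv, Preadditive.comp_zsmul,
        Preadditive.zsmul_comp, smul_smul, eqToHom_trans]
      rw [Nat.add_div_left _ (by omega), Nat.mul_succ, pow_add, mul_comm]
    · have h' : (n + 2 + i) % (n + 2) ≠ 0 := by rwa [Nat.add_mod_left]
      rw [trivD, trivD, dif_neg h, dif_neg h']
      simp

variable {n S} [S.Additive]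

lemma trivCand_X_zero (Z : C) : (trivCand n S Z).X 0 = Z := by
  simp [trivCand, trivX_of_lt]

lemma trivCand_X_one (Z : C) : (trivCand n S Z).X 1 = Z := by
  simp [trivCand, trivX_of_lt]

lemma trivCand_d_zero (Z : C) :
    (trivCand n S Z).d 0 = eqToHom ((trivCand_X_zero Z).trans (trivCand_X_one Z).symm) := by
  simp [trivCand, trivD]

lemma trivCand_d_one (Z : C) : (trivCand n S Z).d 1 = 0 := by
  show trivD n S Z 1 = 0
  rw [trivD, dif_neg (by rw [Nat.mod_eq_of_lt (by omega)]; omega)]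

lemma trivCand_mem (PA : PreAngulation n S) (Z : C) : trivCand n S Z ∈ PA.angles := by
  refine PA.triv_mem _ ?_ fun j h2 hj => ?_
  · rw [trivCand_d_zero]
    infer_instance
  · simp only [trivCand, trivX_of_lt n S Z (show j < n + 2 by omega),
      if_neg (show ¬ j ≤ 1 by omega)]
    exact isZero_zero C

end TrivialAngle

section Rotation

variable {n : ℕ} {S : C ⥤ C} [S.Full]

lemma eq_shift_preimage {A B : Cand n S} (z : A.X (n + 2) ⟶ B.X (n + 2)) :
    z = (A.σ 0).hom ≫ S.map (S.preimage ((A.σ 0).inv ≫ z ≫ (B.σ 0).hom)) ≫ (B.σ 0).inv := by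
  simp

variable [S.Faithful]

lemma comp_preimage_eq_of_shift {A B : Cand n S} (x : A.X 1 ⟶ B.X 1)
    (y : A.X (n + 2 + 1) ⟶ B.X (n + 2 + 1)) (z : A.X (n + 2) ⟶ B.X (n + 2))
    (hy : y = (A.σ 1).hom ≫ S.map x ≫ (B.σ 1).inv) (hz : A.d (n + 2) ≫ y = z ≫ B.d (n + 2)) :
    A.d 0 ≫ x = S.preimage ((A.σ 0).inv ≫ z ≫ (B.σ 0).hom) ≫ B.d 0 := by
  apply S.map_injective
  rw [Functor.map_comp, Functor.map_comp, Functor.map_preimage, A.map_d, B.map_d]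
  have h : A.d (n + 2) ≫ (A.σ 1).hom ≫ S.map x = z ≫ B.d (n + 2) ≫ (B.σ 1).hom := by
    simp [← reassoc_of% hz, hy]
  simp only [Preadditive.zsmul_comp, Preadditive.comp_zsmul, Category.assoc,
    Iso.hom_inv_id_assoc, Nat.add_zero, h]

noncomputable def CandHom.unrot {A B : Cand n S} (Ψ : CandHom n S A.rot B.rot) :
    CandHom n S A B where
  φ
    | 0 => S.preimage ((A.σ 0).inv ≫ Ψ.φ (n + 1) ≫ (B.σ 0).hom)
    | i + 1 => Ψ.φ i
  comm
    | 0 => comp_preimage_eq_of_shift _ _ _ (Ψ.shift 0) (Ψ.comm (n + 1))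
    | i + 1 => Ψ.comm i
  shift
    | 0 => eq_shift_preimage (Ψ.φ (n + 1))
    | i + 1 => Ψ.shift i

end Rotation

lemma CandHom.comm_conn {n : ℕ} {S : C ⥤ C} {A B : Cand n S} (Φ : CandHom n S A B) :
    Φ.φ (n + 1) ≫ B.conn = A.conn ≫ S.map (Φ.φ 0) := by
  have hc : A.d (n + 1) ≫ Φ.φ (n + 2) = Φ.φ (n + 1) ≫ B.d (n + 1) := Φ.comm (n + 1)
  have hs : Φ.φ (n + 2) = (A.σ 0).hom ≫ S.map (Φ.φ 0) ≫ (B.σ 0).inv := Φ.shift 0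
  simp [Cand.conn, ← reassoc_of% hc, hs]

namespace PreAngulation

variable {n : ℕ} {S : C ⥤ C} (PA : PreAngulation n S)

section FullyFaithful

variable [S.Full] [S.Faithful]

lemma exists_candHom_of_comm (j : ℕ) {A B : Cand n S} (hA : A ∈ PA.angles)
    (hB : B ∈ PA.angles) (a : A.X j ⟶ B.X j) (b : A.X (j + 1) ⟶ B.X (j + 1))
    (h : A.d j ≫ b = a ≫ B.d j) : ∃ Φ : CandHom n S A B, Φ.φ j = a ∧ Φ.φ (j + 1) = b := by
  induction j generalizing A B with
  | zero => exact PA.ext_hom hA hB a b h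
  | succ j ih =>
    obtain ⟨Ψ, ha, hb⟩ := ih ((PA.rot_mem A).mp hA) ((PA.rot_mem B).mp hB) a b h
    exact ⟨Ψ.unrot, ha, hb⟩

lemma exists_candHom_of_comm_conn {A B : Cand n S} (hA : A ∈ PA.angles) (hB : B ∈ PA.angles)
    (a : A.X 0 ⟶ B.X 0) (b : A.X (n + 1) ⟶ B.X (n + 1))
    (h : b ≫ B.conn = A.conn ≫ S.map a) :
    ∃ Φ : CandHom n S A B, Φ.φ 0 = a ∧ Φ.φ (n + 1) = b := by
  obtain ⟨Φ, hb, hsa⟩ := PA.exists_candHom_of_comm (n + 1) hA hB b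
    ((A.σ 0).hom ≫ S.map a ≫ (B.σ 0).inv) (by
      rw [← cancel_mono (B.σ 0).hom]
      simpa [Cand.conn] using h.symm)
  refine ⟨Φ, S.map_injective ?_, hb⟩
  have hs : Φ.φ (n + 2) = (A.σ 0).hom ≫ S.map (Φ.φ 0) ≫ (B.σ 0).inv := Φ.shift 0
  simpa [hsa] using hs.symm

end FullyFaithful

variable [S.Additive] [HasZeroObject C]

lemma d_comp_d {A : Cand n S} (hA : A ∈ PA.angles) (j : ℕ) : A.d j ≫ A.d (j + 1) = 0 := by
  induction j generalizing A with
  | zero =>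
    obtain ⟨Φ, -, hΦ⟩ := PA.ext_hom (trivCand_mem PA (A.X 0)) hA (eqToHom (trivCand_X_zero _))
      (eqToHom (trivCand_X_one _) ≫ A.d 0) (by simp [trivCand_d_zero])
    have h := Φ.comm 1
    rw [hΦ, trivCand_d_one, zero_comp, Category.assoc] at h
    simpa using h.symm
  | succ j ih => exact ih ((PA.rot_mem A).mp hA)

/-- Compare the rotation of `A` with the trivial `(n+2)`-angle on `Y`. -/
lemma exists_d_one_comp_eq [S.Full] [S.Faithful] {A : Cand n S} (hA : A ∈ PA.angles) {Y : C}
    (u : A.X 1 ⟶ Y) (hu : A.d 0 ≫ u = 0) : ∃ k, A.d 1 ≫ k = u := by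
  have hconn : (0 : A.X (n + 2) ⟶ (trivCand n S Y).X (n + 1)) ≫ (trivCand n S Y).conn =
      (A.d (n + 2) ≫ (A.σ 1).hom) ≫ S.map (u ≫ eqToHom (trivCand_X_zero Y).symm) := by
    rw [A.d_add_period_comp 0, Category.assoc, Preadditive.zsmul_comp, ← Functor.map_comp,
      reassoc_of% hu]
    simp
  obtain ⟨Φ, hΦ, -⟩ := PA.exists_candHom_of_comm_conn ((PA.rot_mem A).mp hA)
    (trivCand_mem PA Y) _ _ hconn
  have key : ∀ (x : A.X 1 ⟶ (trivCand n S Y).X 0) (y : A.X 2 ⟶ (trivCand n S Y).X 1),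
      A.d 1 ≫ y = x ≫ (trivCand n S Y).d 0 → x = u ≫ eqToHom (trivCand_X_zero Y).symm →
      A.d 1 ≫ y ≫ eqToHom (trivCand_X_one Y) = u := by
    rintro x y h rfl
    simp [reassoc_of% h, trivCand_d_zero]
  exact ⟨_, key _ _ (Φ.comm 0) hΦ⟩

lemma exists_d_comp_eq [S.Full] [S.Faithful] {A : Cand n S} (hA : A ∈ PA.angles) (j : ℕ)
    {Y : C} (u : A.X (j + 1) ⟶ Y) (hu : A.d j ≫ u = 0) : ∃ k, A.d (j + 1) ≫ k = u := by
  induction j generalizing A with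
  | zero => exact PA.exists_d_one_comp_eq hA u hu
  | succ j ih => exact ih ((PA.rot_mem A).mp hA) u hu

lemma exists_comp_d_eq_d_comp_comp_d [S.Full] [S.Faithful] {A B : Cand n S}
    (hA : A ∈ PA.angles) (hB : B ∈ PA.angles) (δ : ∀ j, A.X j ⟶ B.X j)
    (hδ : ∀ j ≤ n, A.d j ≫ δ (j + 1) = δ j ≫ B.d j) (hδ₁ : δ 1 = 0) :
    ∀ m ≤ n, ∃ k : A.X (m + 2) ⟶ B.X (m + 1),
      δ (m + 1) ≫ B.d (m + 1) = A.d (m + 1) ≫ k ≫ B.d (m + 1)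
  | 0, _ => ⟨0, by simp [hδ₁]⟩
  | m + 1, hm => by
    obtain ⟨k, hk⟩ := exists_comp_d_eq_d_comp_comp_d hA hB δ hδ hδ₁ m (by omega)
    obtain ⟨k', hk'⟩ := PA.exists_d_comp_eq hA (m + 1) (δ (m + 2) - k ≫ B.d (m + 1))
      (by rw [Preadditive.comp_sub, hδ (m + 1) hm, hk, sub_self])
    refine ⟨k', ?_⟩
    rw [reassoc_of% hk', Preadditive.sub_comp, Category.assoc, PA.d_comp_d hB, comp_zero,
      sub_zero]

/-- The ladder differs from a morphism of `(n+2)`-angles by a homotopy whose last component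
`A.X (n + 2) ≅ S A₀ ⟶ B_{n+1}` vanishes. -/
lemma comp_conn_eq_of_ladder [S.Full] [S.Faithful] {A B : Cand n S}
    (hA : A ∈ PA.angles) (hB : B ∈ PA.angles) (ψ : ∀ j, A.X j ⟶ B.X j)
    (hψ : ∀ j ≤ n, A.d j ≫ ψ (j + 1) = ψ j ≫ B.d j)
    (hzero : ∀ g : S.obj (A.X 0) ⟶ B.X (n + 1), g = 0) :
    ψ (n + 1) ≫ B.conn = A.conn ≫ S.map (ψ 0) := by
  obtain ⟨Φ, hΦ₀, hΦ₁⟩ := PA.ext_hom hA hB (ψ 0) (ψ 1) (hψ 0 (Nat.zero_le _))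
  obtain ⟨k, hk⟩ := PA.exists_comp_d_eq_d_comp_comp_d hA hB (fun j => ψ j - Φ.φ j)
    (fun j hj => by simp only [Preadditive.comp_sub, Preadditive.sub_comp, hψ j hj, Φ.comm])
    (by simp [hΦ₁]) n le_rfl
  have hk₀ : k = 0 := by
    simpa using (A.σ 0).hom ≫= hzero ((A.σ 0).inv ≫ k)
  rw [hk₀, zero_comp, comp_zero, Preadditive.sub_comp, sub_eq_zero] at hk
  rw [← hΦ₀, ← Φ.comm_conn]
  exact (reassoc_of% hk) _

end PreAngulation

lemma AddClosed.isClosedUnderIsomorphisms [HasFiniteBiproducts C] {P : C → Prop}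
    (hP : AddClosed P) : ObjectProperty.IsClosedUnderIsomorphisms P :=
  ⟨fun e h => hP.2.2 _ _ h e.inv e.hom (by simp)⟩

section Extensions

variable {n : ℕ} {S : C ⥤ C} {P : C → Prop}

lemma ExtClosed.exists_realizes [ObjectProperty.IsClosedUnderIsomorphisms P]
    {ang : Set (Cand n S)} (hExt : ExtClosed n S P ang) {A₀ Atop : C} (h₀ : P A₀)
    (htop : P Atop) (f : Atop ⟶ S.obj A₀) :
    ∃ E : ExtSeq n S P ang A₀ Atop, Realizes n S P ang E f := by
  obtain ⟨W, hW, e₀, etop, hmid, hconn⟩ := hExt h₀ htop f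
  have hPW : ∀ j ≤ n + 1, P (W.X j) := by
    intro j hj
    rcases Nat.eq_zero_or_pos j with rfl | hj₀
    · exact ObjectProperty.prop_of_iso P e₀.symm h₀
    rcases hj.lt_or_eq with hj | rfl
    · exact hmid j hj₀ (by omega)
    · exact ObjectProperty.prop_of_iso P etop.symm htop
  exact ⟨⟨W.X, W.d, ⟨hPW, W, hW, fun j _ => Iso.refl _, fun j h => by simp⟩, e₀, etop⟩,
    W, hW, fun j _ => Iso.refl _, fun j h => by simp, by simp [hconn]⟩

lemma ExtSeq.exists_realizes {ang : Set (Cand n S)} {A₀ Atop : C}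
    (E : ExtSeq n S P ang A₀ Atop) : ∃ f, Realizes n S P ang E f := by
  obtain ⟨-, W, hW, e, he⟩ := E.confl
  exact ⟨E.etop.inv ≫ (e (n + 1) le_rfl).inv ≫ W.conn ≫
      S.map ((e 0 (Nat.zero_le _)).hom ≫ E.e₀.hom),
    W, hW, e, he, by simp [← Functor.map_comp]⟩

variable [S.Full] [S.Faithful] (PA : PreAngulation n S)

lemma Realizes.extRel {A₀ Atop : C} {E E' : ExtSeq n S P PA.angles A₀ Atop}
    {f : Atop ⟶ S.obj A₀} (hf : Realizes n S P PA.angles E f)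
    (hf' : Realizes n S P PA.angles E' f) :
    ExtRel n S P PA.angles E E' := by
  obtain ⟨W, hW, e, hd, hconn⟩ := hf
  obtain ⟨W', hW', e', hd', hconn'⟩ := hf'
  obtain ⟨Φ, hΦ₀, hΦtop⟩ := PA.exists_candHom_of_comm_conn hW hW'
    ((e 0 (Nat.zero_le _)).hom ≫ E.e₀.hom ≫ E'.e₀.inv ≫ (e' 0 (Nat.zero_le _)).inv)
    ((e (n + 1) le_rfl).hom ≫ E.etop.hom ≫ E'.etop.inv ≫ (e' (n + 1) le_rfl).inv)
    (by simp [hconn, hconn'])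
  refine ⟨fun j => if h : j ≤ n + 1 then (e j h).inv ≫ Φ.φ j ≫ (e' j h).hom else 0,
    fun j hj => ?_, by simp [hΦ₀], by simp [hΦtop]⟩
  have hdj := hd j (by omega)
  have hdj' := hd' j (by omega)
  rw [← Iso.inv_comp_eq, Iso.eq_comp_inv] at hdj hdj'
  simp [show j ≤ n + 1 by omega, hj, ← hdj, ← hdj', reassoc_of% (Φ.comm j)]

variable [S.Additive] [HasZeroObject C]

lemma Realizes.comp_eq {A₀ A₀' Atop Atop' : C}
    (hzero : ∀ g : S.obj A₀ ⟶ Atop', g = 0)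
    {E : ExtSeq n S P PA.angles A₀ Atop} {E' : ExtSeq n S P PA.angles A₀' Atop'}
    {f : Atop ⟶ S.obj A₀} {f' : Atop' ⟶ S.obj A₀'}
    (hf : Realizes n S P PA.angles E f) (hf' : Realizes n S P PA.angles E' f')
    (a : A₀ ⟶ A₀') (b : Atop ⟶ Atop') (ψ : ∀ j, E.X j ⟶ E'.X j)
    (hψ : ∀ j, j ≤ n → E.d j ≫ ψ (j + 1) = ψ j ≫ E'.d j)
    (hψ₀ : ψ 0 = E.e₀.hom ≫ a ≫ E'.e₀.inv)
    (hψtop : ψ (n + 1) = E.etop.hom ≫ b ≫ E'.etop.inv) :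
    b ≫ f' = f ≫ S.map a := by
  obtain ⟨W, hW, e, hd, hconn⟩ := hf
  obtain ⟨W', hW', e', hd', hconn'⟩ := hf'
  let ψW : ∀ j, W.X j ⟶ W'.X j := fun j =>
    if h : j ≤ n + 1 then (e j h).hom ≫ ψ j ≫ (e' j h).inv else 0
  have hψW : ∀ j ≤ n, W.d j ≫ ψW (j + 1) = ψW j ≫ W'.d j := by
    intro j hj
    simp [ψW, dif_pos (show j ≤ n + 1 by omega), dif_pos (show j + 1 ≤ n + 1 by omega),
      hd j (by omega), hd' j (by omega), reassoc_of% (hψ j hj)]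
  have h := PA.comp_conn_eq_of_ladder hW hW' ψW hψW fun g => by
    have := hzero (S.map (E.e₀.inv ≫ (e 0 (Nat.zero_le _)).inv) ≫ g ≫
      (e' (n + 1) le_rfl).hom ≫ E'.etop.hom)
    simpa using
      (S.map ((e 0 (Nat.zero_le _)).hom ≫ E.e₀.hom) ≫= this) =≫
        (E'.etop.inv ≫ (e' (n + 1) le_rfl).inv)
  rw [← cancel_epi ((e (n + 1) le_rfl).hom ≫ E.etop.hom),
    ← cancel_mono (S.map (E'.e₀.inv ≫ (e' 0 (Nat.zero_le _)).inv))]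
  simpa [ψW, hconn, hconn', hψ₀, hψtop] using h

end Extensions

section YonedaExt

variable {n : ℕ} {S : C ⥤ C} {P : C → Prop} (PA : PreAngulation n S) {A₀ Atop : C}

lemma ExtRel.refl (E : ExtSeq n S P PA.angles A₀ Atop) : ExtRel n S P PA.angles E E :=
  ⟨fun _ => 𝟙 _, by simp, by simp, by simp⟩

variable [S.Additive] [S.Full] [S.Faithful] [HasZeroObject C]

lemma Realizes.eq_of_extRel (hzero : ∀ g : S.obj A₀ ⟶ Atop, g = 0)
    {E E' : ExtSeq n S P PA.angles A₀ Atop} (h : ExtRel n S P PA.angles E E')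
    {f f' : Atop ⟶ S.obj A₀} (hf : Realizes n S P PA.angles E f)
    (hf' : Realizes n S P PA.angles E' f') : f = f' := by
  obtain ⟨ψ, hψ, hψ₀, hψtop⟩ := h
  simpa using (Realizes.comp_eq PA hzero hf hf' (𝟙 _) (𝟙 _) ψ hψ (by simp [hψ₀])
    (by simp [hψtop])).symm

variable [ObjectProperty.IsClosedUnderIsomorphisms P] {PA} (hExt : ExtClosed n S P PA.angles)
  (h₀ : P A₀) (htop : P Atop) (hzero : ∀ g : S.obj A₀ ⟶ Atop, g = 0)

noncomputable def yExtEquiv : (Atop ⟶ S.obj A₀) ≃ YExt n S P PA.angles A₀ Atop where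
  toFun f := Quot.mk _ (hExt.exists_realizes h₀ htop f).choose
  invFun := Quot.lift (fun E => E.exists_realizes.choose) fun _ _ h =>
    Realizes.eq_of_extRel PA hzero h (ExtSeq.exists_realizes _).choose_spec
      (ExtSeq.exists_realizes _).choose_spec
  left_inv f := (Realizes.eq_of_extRel PA hzero (ExtRel.refl PA _)
    (hExt.exists_realizes h₀ htop f).choose_spec (ExtSeq.exists_realizes _).choose_spec).symm
  right_inv := Quot.ind fun E => Quot.sound <|
    Realizes.extRel PA (hExt.exists_realizes h₀ htop _).choose_spec E.exists_realizes.choose_spec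

lemma yExtEquiv_apply {f : Atop ⟶ S.obj A₀} {E : ExtSeq n S P PA.angles A₀ Atop}
    (hE : Realizes n S P PA.angles E f) : yExtEquiv hExt h₀ htop hzero f = Quot.mk _ E :=
  Quot.sound (Realizes.extRel PA (hExt.exists_realizes h₀ htop f).choose_spec hE)

end YonedaExt

section

variable [HasFiniteBiproducts C] (n : ℕ) (P : C → Prop)

theorem statement_1 (e : C ≌ C) [e.functor.Additive]
    (ANG : Angulation n e.functor)
    (hP : AddClosed P)
    (hExt : ExtClosed n e.functor P ANG.angles)
    (hHom : ∀ {A A' : C}, P A → P A' → ∀ f : e.functor.obj A ⟶ A', f = 0) :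
    ∃ Φ : ∀ (A₀ Atop : C), P A₀ → P Atop →
      (Atop ⟶ e.functor.obj A₀) → YExt n e.functor P ANG.angles A₀ Atop,
      -- each Φ is a bijection
      (∀ (A₀ Atop : C) (h₀ : P A₀) (htop : P Atop),
        Function.Bijective (Φ A₀ Atop h₀ htop)) ∧
      -- Φ sends f to the class of any conflation realizing f
      (∀ (A₀ Atop : C) (h₀ : P A₀) (htop : P Atop) (f : Atop ⟶ e.functor.obj A₀)
        (E : ExtSeq n e.functor P ANG.angles A₀ Atop),
        Realizes n e.functor P ANG.angles E f → Φ A₀ Atop h₀ htop f = Quot.mk _ E) ∧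
      -- Φ is additive for an abelian group structure on YExt (bilinearity)
      (∀ (A₀ Atop : C) (h₀ : P A₀) (htop : P Atop),
        ∃ inst : AddCommGroup (YExt n e.functor P ANG.angles A₀ Atop),
          ∀ f g : Atop ⟶ e.functor.obj A₀,
            Φ A₀ Atop h₀ htop (f + g) = inst.add (Φ A₀ Atop h₀ htop f) (Φ A₀ Atop h₀ htop g)) ∧
      -- binaturality of the correspondence between extensions and connecting morphisms
      (∀ (A₀ A₀' Atop Atop' : C), P A₀ → P A₀' → P Atop → P Atop' →
        ∀ (E : ExtSeq n e.functor P ANG.angles A₀ Atop)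
          (E' : ExtSeq n e.functor P ANG.angles A₀' Atop')
          (f : Atop ⟶ e.functor.obj A₀) (f' : Atop' ⟶ e.functor.obj A₀'),
          Realizes n e.functor P ANG.angles E f →
          Realizes n e.functor P ANG.angles E' f' →
          ∀ (a : A₀ ⟶ A₀') (b : Atop ⟶ Atop') (ψ : ∀ j, E.X j ⟶ E'.X j),
            (∀ j, j ≤ n → E.d j ≫ ψ (j + 1) = ψ j ≫ E'.d j) →
            ψ 0 = E.e₀.hom ≫ a ≫ E'.e₀.inv →
            ψ (n + 1) = E.etop.hom ≫ b ≫ E'.etop.inv →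
            b ≫ f' = f ≫ e.functor.map a) := by
  have := hP.isClosedUnderIsomorphisms
  let Φ := fun (A₀ Atop : C) (h₀ : P A₀) (htop : P Atop) =>
    yExtEquiv hExt h₀ htop (hHom h₀ htop)
  refine ⟨fun A₀ Atop h₀ htop => Φ A₀ Atop h₀ htop, fun _ _ _ _ => Equiv.bijective _,
    fun _ _ _ _ _ _ hE => yExtEquiv_apply hExt _ _ _ hE,
    fun A₀ Atop h₀ htop => ⟨(Φ A₀ Atop h₀ htop).symm.addCommGroup, fun f g => ?_⟩,
    fun _ _ _ _ h₀ _ _ htop' _ _ _ _ hf hf' => Realizes.comp_eq _ (hHom h₀ htop') hf hf'⟩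
  exact congrArg (Φ A₀ Atop h₀ htop) (by simp only [Equiv.toFun_as_coe, Equiv.symm_apply_apply])

end

end NAng
end

section
/- Let A be an additive category and n ≥ 1. Suppose given two complexes X₀ →f₀→ X₁ →f₁→ X₂ →f₂→ ⋯ →f_{n−1}→ Xₙ and X₀ →f₀→ X₁ →g₁→ X′₂ →g₂→ ⋯ →g_{n−1}→ X′ₙ sharing the first morphism f₀ (write g₀ = f₀), together with morphisms φ_k : X_k → X′_k for k = 2, …, n satisfying φ₂∘f₁ = g₁ and φ_{k+1}∘f_k = g_k∘φ_k for k = 2, …, n−1. Assume that (1) f_i is a weak cokernel of f_{i−1} for all i = 1, …, n−1; (2) g_i is a weak cokernel of g_{i−1} for all i = 1, …, n−1; and (3) the morphisms f₂, …, f_{n−1} and g₂, …, g_{n−1} all lie in the radical. Then φ₂, …, φ_{n−1} are isomorphisms. -/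
open CategoryTheory CategoryTheory.Limits

universe v u

namespace NAng

/-- If `φ ≫ ψ` and `ψ' ≫ φ` are isomorphisms, then `φ` is an isomorphism. -/
theorem isIso_of_comp_comp {D : Type u} [Category.{v} D] {A B : D} (φ : A ⟶ B) (ψ ψ' : B ⟶ A)
    (h1 : IsIso (φ ≫ ψ)) (h2 : IsIso (ψ' ≫ φ)) : IsIso φ := by
  refine ⟨ψ ≫ inv (φ ≫ ψ), ?_, ?_⟩
  · rw [← Category.assoc, IsIso.hom_inv_id]
  · have hl : (inv (ψ' ≫ φ) ≫ ψ') ≫ φ = 𝟙 B := by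
      rw [Category.assoc, IsIso.inv_hom_id]
    calc (ψ ≫ inv (φ ≫ ψ)) ≫ φ
        = ((inv (ψ' ≫ φ) ≫ ψ') ≫ φ) ≫ (ψ ≫ inv (φ ≫ ψ)) ≫ φ := by rw [hl, Category.id_comp]
      _ = (inv (ψ' ≫ φ) ≫ ψ') ≫ (φ ≫ ψ ≫ inv (φ ≫ ψ)) ≫ φ := by simp only [Category.assoc]
      _ = (inv (ψ' ≫ φ) ≫ ψ') ≫ φ := by
            rw [← Category.assoc φ, IsIso.hom_inv_id, Category.id_comp]
      _ = 𝟙 B := hl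

/-- Let `A` be an additive category and `n ≥ 1`.  Given two complexes
`X₀ →f₀→ X₁ →f₁→ X₂ → ⋯ → Xₙ` and `X₀ →f₀→ X₁ →g₁→ X′₂ → ⋯ → X′ₙ` sharing the first
morphism `f₀`, morphisms `φ_k : X_k ⟶ X′_k` (`k = 2, …, n`) with `φ₂ ∘ f₁ = g₁` and
`φ_{k+1} ∘ f_k = g_k ∘ φ_k` for `k = 2, …, n−1`, such that the `f`'s and `g`'s are
consecutive weak cokernels in degrees `1, …, n−1`, and `f₂, …, f_{n−1}`,
`g₂, …, g_{n−1}` lie in the radical, the morphisms `φ₂, …, φ_{n−1}` are isomorphisms. -/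
theorem statement_2 {C : Type u} [Category.{v} C] [Preadditive C] [HasFiniteBiproducts C]
    (n : ℕ) (hn : 1 ≤ n)
    (X Y : ℕ → C) (f : ∀ i, X i ⟶ X (i + 1)) (g : ∀ i, Y i ⟶ Y (i + 1))
    (h0 : Y 0 = X 0) (h1 : Y 1 = X 1)
    (hshare : g 0 = eqToHom h0 ≫ f 0 ≫ eqToHom h1.symm)
    (φ : ∀ i, X i ⟶ Y i)
    (hsq1 : f 1 ≫ φ 2 = eqToHom h1.symm ≫ g 1)
    (hsq : ∀ k, 2 ≤ k → k + 1 ≤ n → f k ≫ φ (k + 1) = φ k ≫ g k)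
    (hwcf : ∀ i, i + 1 < n → IsWeakCokernel (f i) (f (i + 1)))
    (hwcg : ∀ i, i + 1 < n → IsWeakCokernel (g i) (g (i + 1)))
    (hradf : ∀ i, 2 ≤ i → i < n → InRad (f i))
    (hradg : ∀ i, 2 ≤ i → i < n → InRad (g i)) :
    ∀ k, 2 ≤ k → k < n → IsIso (φ k) := by
  have key : ∀ m : ℕ, m + 2 < n → ∃ ψ : Y (m + 2) ⟶ X (m + 2),
      φ (m + 2) ≫ ψ = 𝟙 (X (m + 2)) ∧ ψ ≫ φ (m + 2) = 𝟙 (Y (m + 2)) ∧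
      g (m + 1) ≫ ψ ≫ f (m + 2) = 0 := by
    intro m
    induction m with
    | zero =>
      intro hm
      -- construct a raw ψ₂ via the weak cokernel property of g 1
      obtain ⟨ψ, hψ⟩ := (hwcg 0 (by omega)).2 _ (eqToHom h1 ≫ f 1) (by
        rw [hshare]
        simp only [Category.assoc, eqToHom_trans_assoc, eqToHom_refl, Category.id_comp]
        rw [(hwcf 0 (by omega)).1, comp_zero])
      -- f 1 ≫ (𝟙 - φ 2 ≫ ψ) = 0
      have hb : f 1 ≫ (𝟙 (X 2) - φ 2 ≫ ψ) = 0 := by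
        rw [Preadditive.comp_sub, Category.comp_id, ← Category.assoc, hsq1,
          Category.assoc, ← hψ]
        simp
      -- g 1 ≫ (𝟙 - ψ ≫ φ 2) = 0
      have hc : g 1 ≫ (𝟙 (Y 2) - ψ ≫ φ 2) = 0 := by
        rw [Preadditive.comp_sub, Category.comp_id, ← Category.assoc, ← hψ,
          Category.assoc, hsq1]
        simp
      -- both composites are isomorphisms
      obtain ⟨s, hs⟩ := (hwcf 1 (by omega)).2 _ _ hb
      obtain ⟨t, ht⟩ := (hwcg 1 (by omega)).2 _ _ hc
      have hiso1 : IsIso (φ 2 ≫ ψ) := by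
        have := hradf 2 le_rfl hm s
        have he : φ 2 ≫ ψ = 𝟙 (X 2) - f 2 ≫ s := by
          rw [← hs]; abel
        rw [he]; exact this
      have hiso2 : IsIso (ψ ≫ φ 2) := by
        have := hradg 2 le_rfl hm t
        have he : ψ ≫ φ 2 = 𝟙 (Y 2) - g 2 ≫ t := by
          rw [← ht]; abel
        rw [he]; exact this
      have hφ : IsIso (φ 2) := isIso_of_comp_comp _ ψ ψ hiso1 hiso2
      refine ⟨inv (φ 2), IsIso.hom_inv_id _, IsIso.inv_hom_id _, ?_⟩
      have hg1 : g 1 ≫ inv (φ 2) = g 1 ≫ ψ := by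
        have h' : g 1 ≫ ψ ≫ φ 2 = g 1 := by
          have h'' := hc
          rw [Preadditive.comp_sub, Category.comp_id, sub_eq_zero] at h''
          exact h''.symm
        calc g 1 ≫ inv (φ 2) = (g 1 ≫ ψ ≫ φ 2) ≫ inv (φ 2) := by rw [h']
          _ = g 1 ≫ ψ := by simp
      have hψ' : eqToHom h1 ≫ f 1 = g 1 ≫ ψ := hψ
      have hff : f 1 ≫ f 2 = 0 := (hwcf 1 (by omega)).1
      show g 1 ≫ inv (φ 2) ≫ f 2 = 0
      rw [← Category.assoc, hg1, ← hψ', Category.assoc, hff, comp_zero]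
    | succ m ih =>
      intro hm
      obtain ⟨ψ, hl, hr, hz⟩ := ih (by omega)
      -- construct a raw ψ via the weak cokernel property of g (m+2)
      obtain ⟨ψ1, hψ1⟩ := (hwcg (m + 1) (by omega)).2 _ (ψ ≫ f (m + 2)) hz
      have hsq' : f (m + 2) ≫ φ (m + 3) = φ (m + 2) ≫ g (m + 2) :=
        hsq (m + 2) (by omega) (by omega)
      have hb : f (m + 2) ≫ (𝟙 (X (m + 3)) - φ (m + 3) ≫ ψ1) = 0 := by
        rw [Preadditive.comp_sub, Category.comp_id, ← Category.assoc, hsq',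
          Category.assoc, ← hψ1, ← Category.assoc, hl, Category.id_comp, sub_self]
      have hc : g (m + 2) ≫ (𝟙 (Y (m + 3)) - ψ1 ≫ φ (m + 3)) = 0 := by
        rw [Preadditive.comp_sub, Category.comp_id, ← Category.assoc, ← hψ1,
          Category.assoc, hsq', ← Category.assoc, hr, Category.id_comp, sub_self]
      obtain ⟨s, hs⟩ := (hwcf (m + 2) (by omega)).2 _ _ hb
      obtain ⟨t, ht⟩ := (hwcg (m + 2) (by omega)).2 _ _ hc
      have hiso1 : IsIso (φ (m + 3) ≫ ψ1) := by
        have := hradf (m + 3) (by omega) hm s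
        have he : φ (m + 3) ≫ ψ1 = 𝟙 (X (m + 3)) - f (m + 3) ≫ s := by
          rw [← hs]; abel
        rw [he]; exact this
      have hiso2 : IsIso (ψ1 ≫ φ (m + 3)) := by
        have := hradg (m + 3) (by omega) hm t
        have he : ψ1 ≫ φ (m + 3) = 𝟙 (Y (m + 3)) - g (m + 3) ≫ t := by
          rw [← ht]; abel
        rw [he]; exact this
      have hφ : IsIso (φ (m + 3)) := isIso_of_comp_comp _ ψ1 ψ1 hiso1 hiso2
      refine ⟨inv (φ (m + 3)), IsIso.hom_inv_id _, IsIso.inv_hom_id _, ?_⟩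
      have hg : g (m + 2) ≫ inv (φ (m + 3)) = g (m + 2) ≫ ψ1 := by
        have h' : g (m + 2) ≫ ψ1 ≫ φ (m + 3) = g (m + 2) := by
          have h'' := hc
          rw [Preadditive.comp_sub, Category.comp_id, sub_eq_zero] at h''
          exact h''.symm
        calc g (m + 2) ≫ inv (φ (m + 3))
            = (g (m + 2) ≫ ψ1 ≫ φ (m + 3)) ≫ inv (φ (m + 3)) := by rw [h']
          _ = g (m + 2) ≫ ψ1 := by simp
      have hψ1' : ψ ≫ f (m + 2) = g (m + 2) ≫ ψ1 := hψ1
      have hff : f (m + 2) ≫ f (m + 3) = 0 := (hwcf (m + 2) (by omega)).1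
      show g (m + 2) ≫ inv (φ (m + 3)) ≫ f (m + 3) = 0
      rw [← Category.assoc, hg, ← hψ1', Category.assoc, hff, comp_zero]
  intro k hk2 hkn
  obtain ⟨m, rfl⟩ : ∃ m, k = m + 2 := ⟨k - 2, by omega⟩
  obtain ⟨ψ, hl, hr, -⟩ := key m hkn
  exact ⟨ψ, hl, hr⟩

end NAng
end

section
/- Let n ≥ 1 and let (F, Σₙ, ⬠) be an (n+2)-angulated Krull–Schmidt category. Let f₀ : X₀ → X₁ be a morphism and let X be a minimal completion of f₀. Then X is a direct summand of any (n+2)-angle Y containing f₀ in position 0: there exist morphisms of (n+2)-angles φ : X → Y and ψ : Y → X, both equal to the identity in positions 0 and 1, such that ψ∘φ is an isomorphism of (n+2)-angles. Moreover, the minimal completion of f₀ is unique up to isomorphism of (n+2)-angles. -/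
open CategoryTheory CategoryTheory.Limits

universe v u

namespace NAng

/-!
By (F3) the identities of `X₀` and `X₁` extend to morphisms `M → Y → M`, whose composite `θ` is
the identity in positions `0` and `1`. Applying (F3) to trivial `(n+2)`-angles shows that each
`d (j+1)` is a weak cokernel of `d j`; inductively this gives `θ j = u + d j ≫ k` with `u`
invertible and `u ≫ d j = d j`, so `θ j = u ≫ (𝟙 + d j ≫ k)`. The second factor is invertible
because `d j` is radical for `2 ≤ j ≤ n`, and for `j = n + 1` because `θ (n + 2) = 𝟙` forces
`(d j ≫ k) ≫ (d j ≫ k) = 0`; periodicity covers the remaining positions. Uniqueness follows by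
applying this to both composites of two minimal completions.
-/

variable {C : Type u} [Category.{v} C]

lemma isIso_of_isIso_comp_of_isIso_comp {X Y : C} {f : X ⟶ Y} {g : Y ⟶ X} (_ : IsIso (f ≫ g))
    (_ : IsIso (g ≫ f)) : IsIso f :=
  have : Mono f := mono_of_mono f g
  have : IsSplitEpi f := ⟨⟨inv (g ≫ f) ≫ g, by simp⟩⟩
  isIso_of_mono_of_isSplitEpi f

section ContractibleObjects

variable [HasZeroObject C] (n : ℕ) (S : C ⥤ C)

open ZeroObject

/-- The `(n+2)`-periodic object `S^q (W_r)` in position `(n + 2) q + r`, where `W_r = W` for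
`r ∈ {p, p + 1}` and `W_r = 0` otherwise. -/
noncomputable def contractibleX (p : ℕ) (W : C) (i : ℕ) : C :=
  S.obj^[i / (n + 2)] (if i % (n + 2) = p ∨ i % (n + 2) = p + 1 then W else 0)

variable {n S}

lemma contractibleX_add (p : ℕ) (W : C) (i : ℕ) :
    contractibleX n S p W (n + 2 + i) = S.obj (contractibleX n S p W i) := by
  rw [contractibleX, contractibleX, Nat.add_comm, Nat.add_div_right i (by omega),
    Nat.add_mod_right, Function.iterate_succ_apply']

lemma contractibleX_of_lt {p : ℕ} (W : C) {i : ℕ} (hi : i < n + 2) :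
    contractibleX n S p W i = if i = p ∨ i = p + 1 then W else 0 := by
  rw [contractibleX, Nat.div_eq_of_lt hi, Nat.mod_eq_of_lt hi, Function.iterate_zero_apply]

lemma contractibleX_succ {p : ℕ} (hp : p + 1 < n + 2) (W : C) {i : ℕ} (hi : i % (n + 2) = p) :
    contractibleX n S p W (i + 1) = contractibleX n S p W i := by
  have hi' : i + 1 = (p + 1) + (n + 2) * (i / (n + 2)) := by
    have := Nat.div_add_mod i (n + 2)
    omega
  rw [contractibleX, contractibleX, hi', Nat.add_mul_mod_self_left, Nat.mod_eq_of_lt hp,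
    Nat.add_mul_div_left _ _ (by omega), Nat.div_eq_of_lt hp, Nat.zero_add, hi]
  simp

lemma contractibleX_self {p : ℕ} (hp : p < n + 2) (W : C) : contractibleX n S p W p = W := by
  simp [contractibleX_of_lt W hp]

lemma contractibleX_self_add_one {p : ℕ} (hp : p + 1 < n + 2) (W : C) :
    contractibleX n S p W (p + 1) = W := by
  simp [contractibleX_of_lt W hp]

lemma isZero_contractibleX {p : ℕ} (W : C) {i : ℕ} (hi : i < n + 2) (hip : i ≠ p)
    (hip' : i ≠ p + 1) : IsZero (contractibleX n S p W i) := by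
  rw [contractibleX_of_lt W hi, if_neg (by omega)]
  exact isZero_zero C

end ContractibleObjects

variable [Preadditive C]

lemma isIso_id_add_comp_swap {X Y : C} (f : X ⟶ Y) (g : Y ⟶ X) [IsIso (𝟙 X + f ≫ g)] :
    IsIso (𝟙 Y + g ≫ f) := by
  set w := inv (𝟙 X + f ≫ g)
  have hw₁ : w + f ≫ g ≫ w = 𝟙 X := by
    simpa only [Preadditive.add_comp, Category.id_comp, Category.assoc] using
      IsIso.hom_inv_id (𝟙 X + f ≫ g)
  have hw₂ : w + w ≫ f ≫ g = 𝟙 X := by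
    simpa only [Preadditive.comp_add, Category.comp_id] using IsIso.inv_hom_id (𝟙 X + f ≫ g)
  refine ⟨𝟙 Y - g ≫ w ≫ f, ?_, ?_⟩
  · calc (𝟙 Y + g ≫ f) ≫ (𝟙 Y - g ≫ w ≫ f) = 𝟙 Y + g ≫ f - g ≫ (w + f ≫ g ≫ w) ≫ f := by
          simp only [Category.assoc, Category.id_comp, Category.comp_id, Preadditive.comp_add,
            Preadditive.add_comp, Preadditive.comp_sub]
      _ = 𝟙 Y := by rw [hw₁]; simp
  · calc (𝟙 Y - g ≫ w ≫ f) ≫ (𝟙 Y + g ≫ f) = 𝟙 Y + g ≫ f - g ≫ (w + w ≫ f ≫ g) ≫ f := by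
          simp only [Category.assoc, Category.id_comp, Category.comp_id, Preadditive.comp_add,
            Preadditive.add_comp, Preadditive.sub_comp]
          abel
      _ = 𝟙 Y := by rw [hw₂]; simp

lemma isIso_id_add_of_comp_self_eq_zero {X : C} (a : X ⟶ X) (h : a ≫ a = 0) :
    IsIso (𝟙 X + a) :=
  ⟨𝟙 X - a, by simp [Preadditive.comp_sub, h], by simp [Preadditive.sub_comp, h]⟩

lemma InRad.isIso_id_add {X Y : C} {f : X ⟶ Y} (hf : InRad f) (k : Y ⟶ X) :
    IsIso (𝟙 X + f ≫ k) := by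
  simpa using hf (-k)

section Decomposition

variable {X Y Z : C} {d : X ⟶ Y} {u : X ⟶ X}

lemma add_comp_eq_comp_id_add (hu : u ≫ d = d) (k : Y ⟶ X) : u + d ≫ k = u ≫ (𝟙 X + d ≫ k) := by
  rw [Preadditive.comp_add, Category.comp_id, reassoc_of% hu]

lemma InRad.isIso_add (hd : InRad d) [IsIso u] (hu : u ≫ d = d) (k : Y ⟶ X) :
    IsIso (u + d ≫ k) := by
  have := hd.isIso_id_add k
  rw [add_comp_eq_comp_id_add hu]
  infer_instance

lemma isIso_add_of_comp_eq [IsIso u] (hu : u ≫ d = d) (k : Y ⟶ X) (h : (u + d ≫ k) ≫ d = d) :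
    IsIso (u + d ≫ k) := by
  have hdkd : d ≫ k ≫ d = 0 := by
    simpa [Preadditive.add_comp, hu] using h
  have := isIso_id_add_of_comp_self_eq_zero (d ≫ k) (by simp [reassoc_of% hdkd])
  rw [add_comp_eq_comp_id_add hu]
  infer_instance

/-- The witness is `u' = 𝟙 + k ≫ d`. -/
lemma exists_decomp_of_isWeakCokernel {d' : Y ⟶ Z} (hd : IsWeakCokernel d d') {θ : X ⟶ X}
    {θ' : Y ⟶ Y} (hθ : d ≫ θ' = θ ≫ d) {k : Y ⟶ X} (hu : u ≫ d = d) (hθu : θ = u + d ≫ k)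
    (hk : IsIso (𝟙 X + d ≫ k)) :
    ∃ (u' : Y ⟶ Y) (k' : Z ⟶ Y), IsIso u' ∧ u' ≫ d' = d' ∧ θ' = u' + d' ≫ k' := by
  have hz : d ≫ (θ' - (𝟙 Y + k ≫ d)) = 0 := by
    simp only [Preadditive.comp_sub, Preadditive.comp_add, hθ, hθu, Preadditive.add_comp, hu,
      Category.comp_id, Category.assoc, sub_self]
  obtain ⟨k', hk'⟩ := hd.2 _ _ hz
  refine ⟨𝟙 Y + k ≫ d, k', isIso_id_add_comp_swap d k, ?_, ?_⟩
  · simp [Preadditive.add_comp, hd.1]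
  · rw [← hk', add_sub_cancel]

end Decomposition

variable {n : ℕ} {S : C ⥤ C}

def Cand.IsMinimal (M : Cand n S) : Prop :=
  ∀ j, 2 ≤ j → j ≤ n → InRad (M.d j)

@[simps]
def CandHom.comp {A B T : Cand n S} (Φ : CandHom n S A B) (Ψ : CandHom n S B T) :
    CandHom n S A T where
  φ i := Φ.φ i ≫ Ψ.φ i
  comm i := by rw [reassoc_of% Φ.comm i, Ψ.comm, Category.assoc]
  shift i := by simp [Φ.shift, Ψ.shift]

lemma CandHom.isIso_φ_of_forall_lt {A B : Cand n S} (Φ : CandHom n S A B)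
    (h : ∀ j < n + 2, IsIso (Φ.φ j)) (j : ℕ) : IsIso (Φ.φ j) := by
  induction j using Nat.strong_induction_on with
  | _ j ih =>
    rcases Nat.lt_or_ge j (n + 2) with hj | hj
    · exact h j hj
    · obtain ⟨i, rfl⟩ := Nat.exists_eq_add_of_le hj
      have := ih i (by omega)
      rw [Φ.shift i]
      infer_instance

lemma PreAngulation.exists_candHom_of_d_zero_eq (P : PreAngulation n S) {A B : Cand n S}
    (hA : A ∈ P.angles) (hB : B ∈ P.angles) {X₀ X₁ : C} {f : X₀ ⟶ X₁} {a₀ : A.X 0 ≅ X₀}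
    {a₁ : A.X 1 ≅ X₁} {b₀ : B.X 0 ≅ X₀} {b₁ : B.X 1 ≅ X₁} (hAd : A.d 0 = a₀.hom ≫ f ≫ a₁.inv)
    (hBd : B.d 0 = b₀.hom ≫ f ≫ b₁.inv) :
    ∃ Φ : CandHom n S A B, Φ.φ 0 = a₀.hom ≫ b₀.inv ∧ Φ.φ 1 = a₁.hom ≫ b₁.inv :=
  P.ext_hom hA hB _ _ (by simp [hAd, hBd])

section Contractible

variable [HasZeroObject C] [S.Additive]

/-- `± 𝟙 W` from position `p` to `p + 1` of each period and zero elsewhere; the sign `(-1) ^ (n q)`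
in the `q`-th period is what `Cand.compat` demands. -/
noncomputable def contractibleD (p : ℕ) (hp : p + 1 < n + 2) (W : C) (i : ℕ) :
    contractibleX n S p W i ⟶ contractibleX n S p W (i + 1) :=
  if h : i % (n + 2) = p then
    ((-1 : ℤ) ^ (n * (i / (n + 2)))) • eqToHom (contractibleX_succ hp W h).symm
  else 0

variable (n S)

noncomputable abbrev contractible (p : ℕ) (hp : p + 1 < n + 2) (W : C) : Cand n S where
  X := contractibleX n S p W
  d := contractibleD p hp W
  σ i := eqToIso (contractibleX_add p W i)
  compat i := by
    have hmod : (n + 2 + i) % (n + 2) = i % (n + 2) := Nat.add_mod_left _ _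
    by_cases h : i % (n + 2) = p
    · have hdiv : (n + 2 + i) / (n + 2) = i / (n + 2) + 1 := by
        rw [Nat.add_comm]; exact Nat.add_div_right i (by omega)
      rw [contractibleD, contractibleD, dif_pos h, dif_pos (hmod.trans h), Functor.map_zsmul,
        eqToHom_map, eqToIso.hom, eqToIso.inv]
      simp only [Preadditive.zsmul_comp, Preadditive.comp_zsmul, smul_smul, eqToHom_trans,
        hdiv]
      rw [Nat.mul_succ, pow_add, mul_comm]
    · rw [contractibleD, contractibleD, dif_neg h, dif_neg (hmod ▸ h)]
      simp only [Functor.map_zero, zero_comp, comp_zero, smul_zero]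

variable {n S}

lemma contractible_d_self {p : ℕ} (hp : p + 1 < n + 2) (W : C) :
    (contractible n S p hp W).d p =
      eqToHom (contractibleX_succ hp W (Nat.mod_eq_of_lt (by omega))).symm := by
  show contractibleD p hp W p = _
  rw [contractibleD, dif_pos (Nat.mod_eq_of_lt (by omega)),
    Nat.div_eq_of_lt (by omega), Nat.mul_zero, pow_zero, one_smul]

lemma PreAngulation.contractible_zero_mem (P : PreAngulation n S) (W : C) :
    contractible n S 0 (by omega) W ∈ P.angles := by
  refine P.triv_mem _ ?_ fun j hj hjn => isZero_contractibleX W (by omega) (by omega) (by omega)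
  rw [contractible_d_self]
  infer_instance

/-- Its rotation is a trivial `(n+2)`-angle. -/
lemma PreAngulation.contractible_one_mem (P : PreAngulation n S) (hn : 1 ≤ n) (W : C) :
    contractible n S 1 (by omega) W ∈ P.angles := by
  rw [P.rot_mem]
  refine P.triv_mem _ ?_ fun j hj hjn => ?_
  · show IsIso ((contractible n S 1 (by omega) W).d 1)
    rw [contractible_d_self]
    infer_instance
  · show IsZero (contractibleX n S 1 W (j + 1))
    rcases Nat.lt_or_ge (j + 1) (n + 2) with hj' | hj'
    · exact isZero_contractibleX W hj' (by omega) (by omega)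
    · rw [show j + 1 = n + 2 + 0 by omega, contractibleX_add]
      exact S.map_isZero (isZero_contractibleX W (by omega) (by omega) (by omega))

lemma PreAngulation.d_comp_d_s6 (P : PreAngulation n S) {A : Cand n S} (hA : A ∈ P.angles)
    (j : ℕ) : A.d j ≫ A.d (j + 1) = 0 := by
  induction j generalizing A with
  | succ j ih => exact ih ((P.rot_mem A).mp hA)
  | zero =>
    have e₀ := contractibleX_self (S := S) (n := n) (p := 0) (by omega) (A.X 0)
    have e₁ := contractibleX_self_add_one (S := S) (n := n) (p := 0) (by omega) (A.X 0)
    obtain ⟨Φ, -, hΦ₁⟩ := P.ext_hom (P.contractible_zero_mem (A.X 0)) hA (eqToHom e₀)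
      (eqToHom e₁ ≫ A.d 0) (by rw [contractible_d_self, eqToHom_trans_assoc])
    have hd₁ : (contractible n S 0 (by omega) (A.X 0)).d 1 = 0 := by
      show contractibleD 0 (by omega) (A.X 0) 1 = 0
      rw [contractibleD, dif_neg (by rw [Nat.mod_eq_of_lt (by omega)]; omega)]
    have := Φ.comm 1
    rw [hd₁, hΦ₁, zero_comp, Category.assoc] at this
    exact (cancel_epi (eqToHom e₁)).1 (this.symm.trans comp_zero.symm)

lemma PreAngulation.isWeakCokernel_d (P : PreAngulation n S) (hn : 1 ≤ n) {A : Cand n S}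
    (hA : A ∈ P.angles) (j : ℕ) : IsWeakCokernel (A.d j) (A.d (j + 1)) := by
  refine ⟨P.d_comp_d_s6 hA j, fun W h hh => ?_⟩
  induction j generalizing A with
  | succ j ih => exact ih ((P.rot_mem A).mp hA) h hh
  | zero =>
    have e₁ := contractibleX_self (S := S) (n := n) (p := 1) (by omega) W
    have e₂ := contractibleX_self_add_one (S := S) (n := n) (p := 1) (by omega) W
    obtain ⟨Φ, -, hΦ₁⟩ := P.ext_hom hA (P.contractible_one_mem hn W) 0 (h ≫ eqToHom e₁.symm)
      (by rw [reassoc_of% hh, zero_comp, zero_comp])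
    have := Φ.comm 1
    rw [hΦ₁, contractible_d_self] at this
    exact ⟨Φ.φ 2 ≫ eqToHom e₂, by simp only [reassoc_of% this, eqToHom_trans, eqToHom_refl, Category.comp_id]⟩

lemma PreAngulation.exists_decomp_φ (P : PreAngulation n S) {M : Cand n S} (hM : M ∈ P.angles)
    (hmin : M.IsMinimal) (θ : CandHom n S M M) (h₁ : θ.φ 1 = 𝟙 (M.X 1)) (i : ℕ)
    (hi : i + 2 ≤ n + 1) :
    ∃ (u : M.X (i + 2) ⟶ M.X (i + 2)) (k : M.X (i + 3) ⟶ M.X (i + 2)),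
      IsIso u ∧ u ≫ M.d (i + 2) = M.d (i + 2) ∧ θ.φ (i + 2) = u + M.d (i + 2) ≫ k := by
  have hn : 1 ≤ n := by omega
  induction i with
  | zero =>
    refine exists_decomp_of_isWeakCokernel (P.isWeakCokernel_d hn hM 1) (θ.comm 1)
      (Category.id_comp _) (k := 0) (by rw [h₁, comp_zero, add_zero]) ?_
    rw [comp_zero, add_zero]
    infer_instance
  | succ i ih =>
    obtain ⟨u, k, -, hud, hθ⟩ := ih (by omega)
    exact exists_decomp_of_isWeakCokernel (P.isWeakCokernel_d hn hM (i + 2)) (θ.comm (i + 2)) hud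
      hθ ((hmin (i + 2) (by omega) (by omega)).isIso_id_add k)

lemma PreAngulation.isIso_φ_of_isMinimal (P : PreAngulation n S) {M : Cand n S}
    (hM : M ∈ P.angles) (hmin : M.IsMinimal) (θ : CandHom n S M M) (h₀ : θ.φ 0 = 𝟙 (M.X 0))
    (h₁ : θ.φ 1 = 𝟙 (M.X 1)) (j : ℕ) : IsIso (θ.φ j) := by
  refine θ.isIso_φ_of_forall_lt (fun j hj => ?_) j
  match j, hj with
  | 0, _ => rw [h₀]; infer_instance
  | 1, _ => rw [h₁]; infer_instance
  | i + 2, hi =>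
    obtain ⟨u, k, hu, hud, hθ⟩ := P.exists_decomp_φ hM hmin θ h₁ i (by omega)
    rw [hθ]
    rcases Nat.lt_or_ge (i + 2) (n + 1) with hin | hin
    · exact (hmin (i + 2) (by omega) (by omega)).isIso_add hud k
    · have hθ' : θ.φ (i + 2 + 1) = 𝟙 _ := by
        rw [show i + 2 + 1 = n + 2 + 0 by omega, θ.shift, h₀]
        simp
      refine isIso_add_of_comp_eq hud k ?_
      rw [← hθ, ← θ.comm, hθ', Category.comp_id]

end Contractible

end NAng

namespace NAng

theorem statement_6_general {C : Type u} [Category.{v} C] [Preadditive C] [HasFiniteBiproducts C]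
    (n : ℕ) (e : C ≌ C) [e.functor.Additive]
    (ANG : Angulation n e.functor)
    {X₀ X₁ : C} (f₀ : X₀ ⟶ X₁)
    (M : Cand n e.functor) (hM : M ∈ ANG.angles)
    (m₀ : M.X 0 ≅ X₀) (m₁ : M.X 1 ≅ X₁)
    (hMd : M.d 0 = m₀.hom ≫ f₀ ≫ m₁.inv)
    (hMmin : ∀ j, 2 ≤ j → j ≤ n → InRad (M.d j)) :
    (∀ Y : Cand n e.functor, Y ∈ ANG.angles →
      ∀ (y₀ : Cand.X Y 0 ≅ X₀) (y₁ : Cand.X Y 1 ≅ X₁),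
        Cand.d Y 0 = y₀.hom ≫ f₀ ≫ y₁.inv →
        ∃ (Φ : CandHom n e.functor M Y) (Ψ : CandHom n e.functor Y M),
          Φ.φ 0 = m₀.hom ≫ y₀.inv ∧ Φ.φ 1 = m₁.hom ≫ y₁.inv ∧
          Ψ.φ 0 = y₀.hom ≫ m₀.inv ∧ Ψ.φ 1 = y₁.hom ≫ m₁.inv ∧
          (∀ j, IsIso (Φ.φ j ≫ Ψ.φ j))) ∧
    (∀ M' : Cand n e.functor, M' ∈ ANG.angles →
      ∀ (m'₀ : Cand.X M' 0 ≅ X₀) (m'₁ : Cand.X M' 1 ≅ X₁),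
        Cand.d M' 0 = m'₀.hom ≫ f₀ ≫ m'₁.inv →
        (∀ j, 2 ≤ j → j ≤ n → InRad (Cand.d M' j)) →
        ∃ Φ : CandHom n e.functor M M', ∀ j, IsIso (Φ.φ j)) := by
  refine ⟨fun Y hY y₀ y₁ hYd => ?_, fun M' hM' m'₀ m'₁ hM'd hM'min => ?_⟩
  · obtain ⟨Φ, hΦ₀, hΦ₁⟩ := ANG.exists_candHom_of_d_zero_eq hM hY hMd hYd
    obtain ⟨Ψ, hΨ₀, hΨ₁⟩ := ANG.exists_candHom_of_d_zero_eq hY hM hYd hMd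
    exact ⟨Φ, Ψ, hΦ₀, hΦ₁, hΨ₀, hΨ₁, ANG.isIso_φ_of_isMinimal hM hMmin (Φ.comp Ψ)
      (by simp [hΦ₀, hΨ₀]) (by simp [hΦ₁, hΨ₁])⟩
  · obtain ⟨Φ, hΦ₀, hΦ₁⟩ := ANG.exists_candHom_of_d_zero_eq hM hM' hMd hM'd
    obtain ⟨Ψ, hΨ₀, hΨ₁⟩ := ANG.exists_candHom_of_d_zero_eq hM' hM hM'd hMd
    have hΦΨ := ANG.isIso_φ_of_isMinimal hM hMmin (Φ.comp Ψ) (by simp [hΦ₀, hΨ₀])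
      (by simp [hΦ₁, hΨ₁])
    have hΨΦ := ANG.isIso_φ_of_isMinimal hM' hM'min (Ψ.comp Φ) (by simp [hΦ₀, hΨ₀])
      (by simp [hΦ₁, hΨ₁])
    exact ⟨Φ, fun j => isIso_of_isIso_comp_of_isIso_comp (hΦΨ j) (hΨΦ j)⟩

/-- In an `(n+2)`-angulated Krull–Schmidt category, a minimal
completion `M` of a morphism `f₀ : X₀ ⟶ X₁` is a direct summand of every
`(n+2)`-angle `Y` containing `f₀` in position `0`, via morphisms of `(n+2)`-angles
which are the identity (i.e. the canonical comparison isomorphisms) in positions `0`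
and `1` and whose composite is an isomorphism.  Moreover the minimal completion of
`f₀` is unique up to isomorphism of `(n+2)`-angles. -/
theorem statement_6 {C : Type u} [Category.{v} C] [Preadditive C] [HasFiniteBiproducts C]
    (n : ℕ) (hn : 1 ≤ n) (e : C ≌ C) [e.functor.Additive]
    (ANG : Angulation n e.functor) (hKS : KrullSchmidt C)
    {X₀ X₁ : C} (f₀ : X₀ ⟶ X₁)
    (M : Cand n e.functor) (hM : M ∈ ANG.angles)
    (m₀ : M.X 0 ≅ X₀) (m₁ : M.X 1 ≅ X₁)
    (hMd : M.d 0 = m₀.hom ≫ f₀ ≫ m₁.inv)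
    (hMmin : ∀ j, 2 ≤ j → j ≤ n → InRad (M.d j)) :
    (∀ Y : Cand n e.functor, Y ∈ ANG.angles →
      ∀ (y₀ : Cand.X Y 0 ≅ X₀) (y₁ : Cand.X Y 1 ≅ X₁),
        Cand.d Y 0 = y₀.hom ≫ f₀ ≫ y₁.inv →
        ∃ (Φ : CandHom n e.functor M Y) (Ψ : CandHom n e.functor Y M),
          Φ.φ 0 = m₀.hom ≫ y₀.inv ∧ Φ.φ 1 = m₁.hom ≫ y₁.inv ∧
          Ψ.φ 0 = y₀.hom ≫ m₀.inv ∧ Ψ.φ 1 = y₁.hom ≫ m₁.inv ∧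
          (∀ j, IsIso (Φ.φ j ≫ Ψ.φ j))) ∧
    (∀ M' : Cand n e.functor, M' ∈ ANG.angles →
      ∀ (m'₀ : Cand.X M' 0 ≅ X₀) (m'₁ : Cand.X M' 1 ≅ X₁),
        Cand.d M' 0 = m'₀.hom ≫ f₀ ≫ m'₁.inv →
        (∀ j, 2 ≤ j → j ≤ n → InRad (Cand.d M' j)) →
        ∃ Φ : CandHom n e.functor M M', ∀ j, IsIso (Φ.φ j)) :=
  statement_6_general n e ANG f₀ M hM m₀ m₁ hMd hMmin

end NAng
end

section
/- Let C be an additive Krull–Schmidt category. Let f : X₁ ⊕ X₂ → Y₁ ⊕ Y₂ be a morphism such that the composite π′₁∘f∘ι₁ lies in rad(X₁, Y₁), where ι₁ : X₁ → X₁ ⊕ X₂ is the canonical inclusion and π′₁ : Y₁ ⊕ Y₂ → Y₁ is the canonical projection. Then every object Z for which there exist morphisms g : Z → X₁ ⊕ X₂ and h : Y₁ ⊕ Y₂ → Z with h∘f∘g an automorphism of Z satisfies Z ∈ add(X₂ ⊕ Y₂). -/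
open CategoryTheory CategoryTheory.Limits

universe v u

namespace NAng

/-- If `𝟙 - v ≫ u` is invertible then so is `𝟙 - u ≫ v`. -/
lemma isIso_one_sub_swap {C : Type u} [Category.{v} C] [Preadditive C]
    {W X : C} (u : W ⟶ X) (v : X ⟶ W) (hvu : IsIso (𝟙 X - v ≫ u)) :
    IsIso (𝟙 W - u ≫ v) := by
  set w := inv (𝟙 X - v ≫ u) with hw
  have hw1 : w - v ≫ u ≫ w = 𝟙 X := by
    have := IsIso.hom_inv_id (𝟙 X - v ≫ u)
    simp only [Preadditive.sub_comp, Category.id_comp, Category.assoc] at this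
    exact this
  have hw2 : w - w ≫ v ≫ u = 𝟙 X := by
    have := IsIso.inv_hom_id (𝟙 X - v ≫ u)
    simpa [Preadditive.comp_sub, Category.assoc] using this
  have h1' : u ≫ w ≫ v - u ≫ v ≫ u ≫ w ≫ v = u ≫ v := by
    have := congrArg (fun t => u ≫ t ≫ v) hw1
    simpa [Preadditive.sub_comp, Preadditive.comp_sub, Category.assoc] using this
  have h2' : u ≫ w ≫ v - u ≫ w ≫ v ≫ u ≫ v = u ≫ v := by
    have := congrArg (fun t => u ≫ t ≫ v) hw2
    simpa [Preadditive.sub_comp, Preadditive.comp_sub, Category.assoc] using this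
  refine ⟨⟨𝟙 W + u ≫ w ≫ v, ?_, ?_⟩⟩
  · have e : (𝟙 W - u ≫ v) ≫ (𝟙 W + u ≫ w ≫ v) =
        𝟙 W + ((u ≫ w ≫ v - u ≫ v ≫ u ≫ w ≫ v) - u ≫ v) := by
      simp only [Preadditive.sub_comp, Preadditive.comp_add, Preadditive.add_comp,
        Preadditive.comp_sub, Category.id_comp, Category.comp_id, Category.assoc]
      abel
    rw [e, h1']
    simp
  · have e : (𝟙 W + u ≫ w ≫ v) ≫ (𝟙 W - u ≫ v) =
        𝟙 W + ((u ≫ w ≫ v - u ≫ w ≫ v ≫ u ≫ v) - u ≫ v) := by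
      simp only [Preadditive.sub_comp, Preadditive.comp_add, Preadditive.add_comp,
        Preadditive.comp_sub, Category.id_comp, Category.comp_id, Category.assoc]
      abel
    rw [e, h2']
    simp

/-- **Matrix lemma.**  Let `C` be an additive Krull–Schmidt category and
`f : X₁ ⊞ X₂ ⟶ Y₁ ⊞ Y₂` with `π′₁ ∘ f ∘ ι₁ ∈ rad(X₁, Y₁)`.  Then every object `Z`
admitting `g : Z ⟶ X₁ ⊞ X₂` and `h : Y₁ ⊞ Y₂ ⟶ Z` with `h ∘ f ∘ g` an automorphism of
`Z` satisfies `Z ∈ add(X₂ ⊞ Y₂)`. -/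
theorem statement_8 {C : Type u} [Category.{v} C] [Preadditive C] [HasFiniteBiproducts C]
    (hKS : KrullSchmidt C)
    (X₁ X₂ Y₁ Y₂ : C) (f : X₁ ⊞ X₂ ⟶ Y₁ ⊞ Y₂)
    (hrad : InRad (biprod.inl ≫ f ≫ biprod.fst))
    (Z : C) (g : Z ⟶ X₁ ⊞ X₂) (h : Y₁ ⊞ Y₂ ⟶ Z) (hiso : IsIso (g ≫ f ≫ h)) :
    InAdd (X₂ ⊞ Y₂) Z := by
  classical
  set h' : Y₁ ⊞ Y₂ ⟶ Z := h ≫ inv (g ≫ f ≫ h) with hh'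
  have hone : g ≫ f ≫ h' = 𝟙 Z := by
    simp [hh', ← Category.assoc]
  set g₁ : Z ⟶ X₁ := g ≫ biprod.fst with hg₁
  set g₂ : Z ⟶ X₂ := g ≫ biprod.snd with hg₂
  set h₁ : Y₁ ⟶ Z := biprod.inl ≫ h' with hh₁
  set h₂ : Y₂ ⟶ Z := biprod.inr ≫ h' with hh₂
  set f₁₁ : X₁ ⟶ Y₁ := biprod.inl ≫ f ≫ biprod.fst with hf₁₁
  set f₁₂ : X₁ ⟶ Y₂ := biprod.inl ≫ f ≫ biprod.snd with hf₁₂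
  set s : Z ⟶ Z := 𝟙 Z - g₁ ≫ f₁₁ ≫ h₁ with hs
  have hsiso : IsIso s := by
    apply isIso_one_sub_swap g₁ (f₁₁ ≫ h₁)
    have := hrad (h₁ ≫ g₁)
    simpa [Category.assoc] using this
  set p : Z ⟶ X₂ ⊞ Y₂ := biprod.lift g₂ (g₁ ≫ f₁₂) with hp
  set q : X₂ ⊞ Y₂ ⟶ Z := biprod.desc (biprod.inr ≫ f ≫ h') h₂ with hq
  have hpq : p ≫ q = s := by
    have htotX : (biprod.fst ≫ biprod.inl + biprod.snd ≫ biprod.inr :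
        X₁ ⊞ X₂ ⟶ X₁ ⊞ X₂) = 𝟙 _ := biprod.total
    have htotY : (biprod.fst ≫ biprod.inl + biprod.snd ≫ biprod.inr :
        Y₁ ⊞ Y₂ ⟶ Y₁ ⊞ Y₂) = 𝟙 _ := biprod.total
    have hsplit : biprod.inr ≫ f ≫ h' =
        (biprod.inr ≫ f ≫ biprod.fst) ≫ h₁ + (biprod.inr ≫ f ≫ biprod.snd) ≫ h₂ := by
      calc biprod.inr ≫ f ≫ h' = biprod.inr ≫ f ≫ 𝟙 _ ≫ h' := by simp
        _ = biprod.inr ≫ f ≫ (biprod.fst ≫ biprod.inl + biprod.snd ≫ biprod.inr) ≫ h' := by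
            rw [htotY]
        _ = _ := by
            simp only [Preadditive.add_comp, Preadditive.comp_add, Category.assoc,
              hh₁, hh₂]
    have expand : g ≫ f ≫ h' =
        g₁ ≫ f₁₁ ≫ h₁ + g₁ ≫ f₁₂ ≫ h₂ +
          (g₂ ≫ (biprod.inr ≫ f ≫ biprod.fst) ≫ h₁ +
           g₂ ≫ (biprod.inr ≫ f ≫ biprod.snd) ≫ h₂) := by
      calc g ≫ f ≫ h' = g ≫ 𝟙 _ ≫ f ≫ 𝟙 _ ≫ h' := by simp
        _ = g ≫ (biprod.fst ≫ biprod.inl + biprod.snd ≫ biprod.inr) ≫ f ≫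
              (biprod.fst ≫ biprod.inl + biprod.snd ≫ biprod.inr) ≫ h' := by
            rw [htotX, htotY]
        _ = _ := by
            simp only [Preadditive.add_comp, Preadditive.comp_add, Category.assoc,
              hg₁, hg₂, hh₁, hh₂, hf₁₁, hf₁₂]
            abel
    have hone' := hone
    rw [expand] at hone'
    have key : g₁ ≫ f₁₂ ≫ h₂ +
        (g₂ ≫ (biprod.inr ≫ f ≫ biprod.fst) ≫ h₁ +
         g₂ ≫ (biprod.inr ≫ f ≫ biprod.snd) ≫ h₂) = s := by
      rw [hs, ← hone']; abel
    rw [hp, hq, biprod.lift_desc, hsplit]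
    rw [← key]
    simp only [Preadditive.comp_add, Category.assoc]
    abel
  refine ⟨1, biproduct.lift (fun _ => p),
    biproduct.desc (fun _ => q ≫ inv s), ?_⟩
  rw [biproduct.lift_desc]
  simp [Fin.sum_univ_one, ← Category.assoc, hpq]

end NAng
end

section
/- Let n ≥ 1, let (F, Σₙ, ⬠) be an (n+2)-angulated Krull–Schmidt category and let A ⊆ F be a full, additive, n-extension closed subcategory with Hom_F(ΣₙA, A) = 0. Then every A-conflation is an n-exact sequence in A. -/
open CategoryTheory CategoryTheory.Limits

universe v u

namespace NAng

/-!
An `(n+2)`-angle is weakly exact at every position: each differential is a weak cokernel of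
the previous one and a weak kernel of the next. Both follow from (F3) by comparing the angle
with a trivial `(n+2)`-angle `W = W → 0 → ⋯ → 0`, rotated so that the given square is the first
one. For weak kernels the comparison only produces a factorization one period later, after
applying `Σₙ`, and `Σₙ` being fully faithful brings it back.

For an `𝒜`-conflation `X₀ → ⋯ → Xₙ₊₁` this gives the inner weak (co)kernel conditions. At the
ends the connecting morphism `c : Xₙ₊₁ → ΣₙX₀` takes over: if `a : A → X₀` is killed by `f₀` then
`Σₙa` factors through `c`, and if `b : Xₙ₊₁ → A` is killed by `fₙ` then `b` factors through `c`.
The factorizations pass through `Hom(ΣₙA, Xₙ₊₁)` and `Hom(ΣₙX₀, A)`, which vanish.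
-/

lemma _root_.CategoryTheory.Functor.exists_eq_comp_of_map_eq_comp {C : Type u} [Category.{v} C]
    (F : C ⥤ C) [F.Full] [F.Faithful] {X Y Z : C} {h : X ⟶ Z} {f : Y ⟶ Z}
    {g : F.obj X ⟶ F.obj Y} (hg : F.map h = g ≫ F.map f) : ∃ k : X ⟶ Y, h = k ≫ f :=
  ⟨F.preimage g, F.map_injective (by rw [hg, F.map_comp, F.map_preimage])⟩

section WeakKernels

variable {C : Type u} [Category.{v} C] [Preadditive C]

lemma isIso_neg_one_pow_zsmul {X Y : C} (m : ℕ) (f : X ⟶ Y) [IsIso f] :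
    IsIso (((-1 : ℤ) ^ m) • f) :=
  ⟨((-1 : ℤ) ^ m) • inv f, by simp [smul_smul, ← mul_pow], by simp [smul_smul, ← mul_pow]⟩

lemma IsWeakCokernel.of_iso {X₀ X₁ X₂ Y₀ Y₁ Y₂ : C} {f : X₀ ⟶ X₁} {g : X₁ ⟶ X₂}
    {f' : Y₀ ⟶ Y₁} {g' : Y₁ ⟶ Y₂} (e₀ : X₀ ≅ Y₀) (e₁ : X₁ ≅ Y₁) (e₂ : X₂ ≅ Y₂)
    (hf : f = e₀.hom ≫ f' ≫ e₁.inv) (hg : g = e₁.hom ≫ g' ≫ e₂.inv) (h : IsWeakCokernel f g) :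
    IsWeakCokernel f' g' := by
  subst hf hg
  refine ⟨by simpa using e₀.inv ≫= h.1 =≫ e₂.hom, fun W b hb => ?_⟩
  obtain ⟨k, hk⟩ := h.2 W (e₁.hom ≫ b) (by simp [hb])
  exact ⟨e₂.inv ≫ k, by simpa using e₁.inv ≫= hk⟩

lemma IsWeakKernel.of_iso {X₀ X₁ X₂ Y₀ Y₁ Y₂ : C} {f : X₀ ⟶ X₁} {g : X₁ ⟶ X₂}
    {f' : Y₀ ⟶ Y₁} {g' : Y₁ ⟶ Y₂} (e₀ : X₀ ≅ Y₀) (e₁ : X₁ ≅ Y₁) (e₂ : X₂ ≅ Y₂)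
    (hf : f = e₀.hom ≫ f' ≫ e₁.inv) (hg : g = e₁.hom ≫ g' ≫ e₂.inv) (h : IsWeakKernel f g) :
    IsWeakKernel f' g' := by
  subst hf hg
  refine ⟨by simpa using e₀.inv ≫= h.1 =≫ e₂.hom, fun W b hb => ?_⟩
  obtain ⟨k, hk⟩ := h.2 W (b ≫ e₁.inv) (by simp [reassoc_of% hb])
  exact ⟨k ≫ e₀.hom, by simpa using hk =≫ e₁.hom⟩

lemma IsWeakCokernel.weakCokernelIn {X Y Z : C} {f : X ⟶ Y} {g : Y ⟶ Z}
    (h : IsWeakCokernel f g) (P : C → Prop) : WeakCokernelIn P f g :=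
  ⟨h.1, fun W _ => h.2 W⟩

lemma IsWeakKernel.weakKernelIn {X Y Z : C} {f : X ⟶ Y} {g : Y ⟶ Z}
    (h : IsWeakKernel f g) (P : C → Prop) : WeakKernelIn P f g :=
  ⟨h.1, fun W _ => h.2 W⟩

lemma monoIn_of_comp_eq_zero {P : C → Prop} {X Y : C} {f : X ⟶ Y}
    (h : ∀ W, P W → ∀ a : W ⟶ X, a ≫ f = 0 → a = 0) : MonoIn P f :=
  fun W hW a b hab => sub_eq_zero.1 (h W hW _ (by rw [Preadditive.sub_comp, hab, sub_self]))

lemma epiIn_of_comp_eq_zero {P : C → Prop} {X Y : C} {f : X ⟶ Y}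
    (h : ∀ W, P W → ∀ b : Y ⟶ W, f ≫ b = 0 → b = 0) : EpiIn P f :=
  fun W hW a b hab => sub_eq_zero.1 (h W hW _ (by rw [Preadditive.comp_sub, hab, sub_self]))

end WeakKernels

section Candidates

variable {C : Type u} [Category.{v} C] [Preadditive C] {n : ℕ} {S : C ⥤ C}

lemma Cand.rot_conn (A : Cand n S) :
    A.rot.conn = (A.σ 0).hom ≫ (((-1 : ℤ) ^ n) • S.map (A.d 0)) := by
  simp [Cand.conn, Cand.rot, A.compat 0]

lemma Cand.isIso_rot_conn (A : Cand n S) [IsIso (A.d 0)] : IsIso A.rot.conn := by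
  rw [Cand.rot_conn]
  have := isIso_neg_one_pow_zsmul n (S.map (A.d 0))
  exact IsIso.comp_isIso' (A.σ 0).isIso_hom this

lemma CandHom.conn_comp {A B : Cand n S} (Φ : CandHom n S A B) :
    A.conn ≫ S.map (Φ.φ 0) = Φ.φ (n + 1) ≫ B.conn := by
  have hsq := Φ.comm (n + 1)
  rw [Φ.shift 0] at hsq
  simp only [Cand.conn, ← reassoc_of% hsq, Category.assoc, Iso.inv_hom_id, Category.comp_id]

end Candidates

lemma succ_mod_eq_and_succ_div_eq {m i : ℕ} (h : i % m + 1 < m) :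
    (i + 1) % m = i % m + 1 ∧ (i + 1) / m = i / m := by
  have hi : i + 1 = (i % m + 1) + m * (i / m) := by
    have := Nat.div_add_mod i m
    omega
  rw [hi, Nat.add_mul_mod_self_left, Nat.mod_eq_of_lt h, Nat.add_mul_div_left _ _ (by omega),
    Nat.div_eq_of_lt h, zero_add]
  exact ⟨rfl, rfl⟩

section TrivialAngle

open ZeroObject

variable {C : Type u} [Category.{v} C] [HasZeroObject C] {n : ℕ} {S : C ⥤ C}

variable (n S) in
/-- The unrolled trivial `(n+2)`-angle `W = W → 0 → ⋯ → 0`, placed in positions `a, a + 1`: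
the `q`-th period carries `S^q W` there and a zero object elsewhere. -/
noncomputable def trivialObj (a : ℕ) (W : C) (i : ℕ) : C :=
  S.obj^[i / (n + 2)] (if i % (n + 2) = a ∨ i % (n + 2) = a + 1 then W else 0)

lemma trivialObj_shift (a : ℕ) (W : C) (i : ℕ) :
    trivialObj n S a W (n + 2 + i) = S.obj (trivialObj n S a W i) := by
  rw [trivialObj, trivialObj, Nat.add_mod_left, Nat.add_div_left _ (by omega),
    Function.iterate_succ_apply']

lemma trivialObj_succ {a i : ℕ} (ha : a + 1 < n + 2) (h : i % (n + 2) = a) (W : C) :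
    trivialObj n S a W i = trivialObj n S a W (i + 1) := by
  obtain ⟨hmod, hdiv⟩ := succ_mod_eq_and_succ_div_eq (h ▸ ha)
  rw [trivialObj, trivialObj, hmod, hdiv, h, if_pos (Or.inl rfl), if_pos (Or.inr rfl)]

lemma trivialObj_of_lt {a i : ℕ} (hi : i < n + 2) (h : i = a ∨ i = a + 1) (W : C) :
    trivialObj n S a W i = W := by
  rw [trivialObj, Nat.mod_eq_of_lt hi, Nat.div_eq_of_lt hi, if_pos h,
    Function.iterate_zero_apply]

variable [Preadditive C]

lemma isZero_trivialObj [S.PreservesZeroMorphisms] {a i : ℕ}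
    (h : ¬(i % (n + 2) = a ∨ i % (n + 2) = a + 1)) (W : C) :
    IsZero (trivialObj n S a W i) := by
  rw [trivialObj, if_neg h]
  induction i / (n + 2) with
  | zero => exact isZero_zero C
  | succ k ih => rw [Function.iterate_succ_apply']; exact S.map_isZero ih

variable (n S) in
/-- The sign `(-1)^(n q)` in the `q`-th period is forced by the sign in `Cand.compat`. -/
noncomputable def trivialD (a : ℕ) (ha : a + 1 < n + 2) (W : C) (i : ℕ) :
    trivialObj n S a W i ⟶ trivialObj n S a W (i + 1) :=
  if h : i % (n + 2) = a then
    ((-1 : ℤ) ^ (n * (i / (n + 2)))) • eqToHom (trivialObj_succ ha h W)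
  else 0

lemma trivialD_of_lt {a : ℕ} (ha : a + 1 < n + 2) (W : C) :
    trivialD n S a ha W a = eqToHom (trivialObj_succ ha (Nat.mod_eq_of_lt (by omega)) W) := by
  rw [trivialD, dif_pos (Nat.mod_eq_of_lt (by omega)), Nat.div_eq_of_lt (by omega), mul_zero,
    pow_zero, one_smul]

lemma trivialD_of_mod_ne {a i : ℕ} (ha : a + 1 < n + 2) (h : i % (n + 2) ≠ a) (W : C) :
    trivialD n S a ha W i = 0 :=
  dif_neg h

variable [S.Additive]

lemma trivialD_shift (a : ℕ) (ha : a + 1 < n + 2) (W : C) (i : ℕ) :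
    trivialD n S a ha W (n + 2 + i) =
      (eqToIso (trivialObj_shift a W i)).hom ≫
        (((-1 : ℤ) ^ n) • S.map (trivialD n S a ha W i)) ≫
          (eqToIso (trivialObj_shift a W (i + 1))).inv := by
  by_cases h : i % (n + 2) = a
  · rw [trivialD, trivialD, dif_pos (by rwa [Nat.add_mod_left]), dif_pos h,
      Nat.add_div_left _ (by omega), Functor.map_zsmul, eqToHom_map]
    simp only [eqToIso.hom, eqToIso.inv, Preadditive.comp_zsmul, Preadditive.zsmul_comp,
      smul_smul, eqToHom_trans]
    rw [mul_add, mul_one, pow_add, mul_comm]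
  · rw [trivialD_of_mod_ne ha (by rwa [Nat.add_mod_left]), trivialD_of_mod_ne ha h,
      Functor.map_zero, smul_zero, zero_comp, comp_zero]

variable (n S) in
@[reducible] noncomputable def trivialCand (a : ℕ) (ha : a + 1 < n + 2) (W : C) : Cand n S where
  X := trivialObj n S a W
  d := trivialD n S a ha W
  σ i := eqToIso (trivialObj_shift a W i)
  compat := trivialD_shift a ha W

instance isIso_trivialCand_d {a : ℕ} (ha : a + 1 < n + 2) (W : C) :
    IsIso ((trivialCand n S a ha W).d a) := by
  change IsIso (trivialD n S a ha W a)
  rw [trivialD_of_lt]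
  infer_instance

variable (PA : PreAngulation n S)

lemma trivialCand_zero_mem (W : C) :
    trivialCand n S 0 (by omega : 0 + 1 < n + 2) W ∈ PA.angles :=
  PA.triv_mem _ (isIso_trivialCand_d _ W) fun j hj₂ hj =>
    isZero_trivialObj (by rw [Nat.mod_eq_of_lt (by omega)]; omega) W

lemma trivialCand_one_mem (ha : 1 + 1 < n + 2) (W : C) : trivialCand n S 1 ha W ∈ PA.angles := by
  refine (PA.rot_mem _).2 (PA.triv_mem _ (isIso_trivialCand_d ha W) fun j hj₂ hj =>
    isZero_trivialObj ?_ W)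
  rcases Nat.lt_or_ge (j + 1) (n + 2) with hlt | hge
  · rw [Nat.mod_eq_of_lt hlt]
    omega
  · rw [show j + 1 = n + 2 by omega, Nat.mod_self]
    omega

end TrivialAngle

namespace PreAngulation

variable {C : Type u} [Category.{v} C] [Preadditive C] {n : ℕ} {S : C ⥤ C}
  (PA : PreAngulation n S)

lemma forall_d_of_forall_d_zero
    (Q : ∀ {X Y Z : C}, (X ⟶ Y) → (Y ⟶ Z) → Prop)
    (h₀ : ∀ A ∈ PA.angles, Q (A.d 0) (A.d 1)) {A : Cand n S} (hA : A ∈ PA.angles) (i : ℕ) :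
    Q (A.d i) (A.d (i + 1)) := by
  induction i generalizing A with
  | zero => exact h₀ A hA
  | succ i ih => exact ih ((PA.rot_mem A).1 hA)

lemma exists_map_eq_comp_conn {T B : Cand n S} (hT : T ∈ PA.angles) (hB : B ∈ PA.angles)
    [IsIso T.conn] (φ₀ : T.X 0 ⟶ B.X 0) (hφ₀ : φ₀ ≫ B.d 0 = 0) :
    ∃ ψ : S.obj (T.X 0) ⟶ B.X (n + 1), S.map φ₀ = ψ ≫ B.conn := by
  obtain ⟨Φ, hΦ₀, -⟩ := PA.ext_hom hT hB φ₀ 0 (by rw [comp_zero, hφ₀])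
  refine ⟨inv T.conn ≫ Φ.φ (n + 1), ?_⟩
  rw [Category.assoc, ← Φ.conn_comp, hΦ₀, IsIso.inv_hom_id_assoc]

lemma exists_eq_comp_d_zero [S.Full] [S.Faithful] {T A : Cand n S} (hT : T ∈ PA.angles)
    (hA : A ∈ PA.angles) [IsIso (T.d 0)] (h : T.X 1 ⟶ A.X 1) (hh : h ≫ A.d 1 = 0) :
    ∃ k : T.X 1 ⟶ A.X 0, h = k ≫ A.d 0 := by
  have := T.isIso_rot_conn
  obtain ⟨ψ, hψ⟩ := PA.exists_map_eq_comp_conn ((PA.rot_mem T).1 hT) ((PA.rot_mem A).1 hA) h hh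
  have hψ' : S.map h = (ψ ≫ (A.σ 0).hom) ≫ (((-1 : ℤ) ^ n) • S.map (A.d 0)) :=
    hψ.trans ((congrArg (ψ ≫ ·) A.rot_conn).trans (Category.assoc _ _ _).symm)
  exact S.exists_eq_comp_of_map_eq_comp
    (hψ'.trans ((Preadditive.comp_zsmul _ _ _).trans (Preadditive.zsmul_comp _ _ _).symm))

variable [HasZeroObject C] [S.Additive] {A : Cand n S}

lemma d_comp_d_zero (hA : A ∈ PA.angles) : A.d 0 ≫ A.d 1 = 0 := by
  have ha : 0 + 1 < n + 2 := by omega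
  have t₀ : (trivialCand n S 0 ha (A.X 0)).X 0 = A.X 0 := trivialObj_of_lt (by omega) (by omega) _
  have t₁ : (trivialCand n S 0 ha (A.X 0)).X 1 = A.X 0 := trivialObj_of_lt (by omega) (by omega) _
  obtain ⟨Φ, -, hΦ₁⟩ := PA.ext_hom (trivialCand_zero_mem PA (A.X 0)) hA (eqToHom t₀)
    (eqToHom t₁ ≫ A.d 0) (by
      change trivialD n S 0 ha _ 0 ≫ _ = _
      rw [trivialD_of_lt]
      simp)
  have hsq := Φ.comm 1
  change trivialD n S 0 ha _ 1 ≫ _ = _ at hsq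
  rw [trivialD_of_mod_ne ha (by rw [Nat.mod_eq_of_lt (by omega)]; omega), zero_comp, hΦ₁,
    Category.assoc] at hsq
  simpa using hsq.symm

lemma isWeakCokernel_d_zero (hn : 1 ≤ n) (hA : A ∈ PA.angles) :
    IsWeakCokernel (A.d 0) (A.d 1) := by
  refine ⟨PA.d_comp_d_zero hA, fun W h hh => ?_⟩
  have ha : 1 + 1 < n + 2 := by omega
  have t₁ : (trivialCand n S 1 ha W).X 1 = W := trivialObj_of_lt (by omega) (by omega) _
  have t₂ : (trivialCand n S 1 ha W).X 2 = W := trivialObj_of_lt (by omega) (by omega) _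
  obtain ⟨Φ, -, hΦ₁⟩ := PA.ext_hom hA (trivialCand_one_mem PA ha W) 0 (h ≫ eqToHom t₁.symm)
    (by rw [← Category.assoc, hh, zero_comp, zero_comp])
  have hsq := Φ.comm 1
  change _ = _ ≫ trivialD n S 1 ha W 1 at hsq
  rw [hΦ₁, trivialD_of_lt, Category.assoc, eqToHom_trans] at hsq
  exact ⟨Φ.φ 2 ≫ eqToHom t₂, by simp [reassoc_of% hsq]⟩

lemma isWeakKernel_d_zero [S.Full] [S.Faithful] (hA : A ∈ PA.angles) :
    IsWeakKernel (A.d 0) (A.d 1) := by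
  refine ⟨PA.d_comp_d_zero hA, fun W h hh => ?_⟩
  have ha : 0 + 1 < n + 2 := by omega
  have t₁ : (trivialCand n S 0 ha W).X 1 = W := trivialObj_of_lt (by omega) (by omega) _
  obtain ⟨k, hk⟩ := PA.exists_eq_comp_d_zero (trivialCand_zero_mem PA W) hA (eqToHom t₁ ≫ h)
    (by rw [Category.assoc, hh, comp_zero])
  exact ⟨eqToHom t₁.symm ≫ k, by simp [← hk]⟩

lemma isWeakCokernel_d_s9 (hn : 1 ≤ n) (hA : A ∈ PA.angles) (i : ℕ) :
    IsWeakCokernel (A.d i) (A.d (i + 1)) :=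
  PA.forall_d_of_forall_d_zero (fun f g => IsWeakCokernel f g)
    (fun _ hB => PA.isWeakCokernel_d_zero hn hB) hA i

lemma isWeakKernel_d [S.Full] [S.Faithful] (hA : A ∈ PA.angles) (i : ℕ) :
    IsWeakKernel (A.d i) (A.d (i + 1)) :=
  PA.forall_d_of_forall_d_zero (fun f g => IsWeakKernel f g)
    (fun _ hB => PA.isWeakKernel_d_zero hB) hA i

lemma isWeakCokernel_conn (hn : 1 ≤ n) (hA : A ∈ PA.angles) :
    IsWeakCokernel (A.d n) A.conn :=
  (PA.isWeakCokernel_d_s9 hn hA n).of_iso (Iso.refl _) (Iso.refl _) (A.σ 0) (by simp)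
    (by simp [Cand.conn])

lemma isWeakKernel_conn [S.Full] [S.Faithful] (hA : A ∈ PA.angles) :
    IsWeakKernel A.conn (((-1 : ℤ) ^ n) • S.map (A.d 0)) :=
  (PA.isWeakKernel_d hA (n + 1)).of_iso (Iso.refl _) (A.σ 0) (A.σ 1) (by simp [Cand.conn])
    (A.compat 0)

end PreAngulation

namespace Matches

variable {C : Type u} [Category.{v} C] [Preadditive C] {n : ℕ} {S : C ⥤ C} {W : Cand n S}
  {X : ℕ → C} {d : ∀ i, X i ⟶ X (i + 1)}

lemma isWeakCokernel (hWX : Matches n S W X d) {i : ℕ} (hi : i < n)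
    (h : IsWeakCokernel (W.d i) (W.d (i + 1))) : IsWeakCokernel (d i) (d (i + 1)) := by
  obtain ⟨e, he⟩ := hWX
  exact h.of_iso (e i (by omega)) (e (i + 1) (by omega)) (e (i + 2) (by omega)) (he i _) (he _ _)

lemma isWeakKernel (hWX : Matches n S W X d) {i : ℕ} (hi : i < n)
    (h : IsWeakKernel (W.d i) (W.d (i + 1))) : IsWeakKernel (d i) (d (i + 1)) := by
  obtain ⟨e, he⟩ := hWX
  exact h.of_iso (e i (by omega)) (e (i + 1) (by omega)) (e (i + 2) (by omega)) (he i _) (he _ _)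

lemma monoIn [S.Faithful] [S.PreservesZeroMorphisms] (hWX : Matches n S W X d)
    (h : IsWeakKernel W.conn (((-1 : ℤ) ^ n) • S.map (W.d 0))) {P : C → Prop}
    (hHom : ∀ Y, P Y → ∀ f : S.obj Y ⟶ X (n + 1), f = 0) : MonoIn P (d 0) := by
  obtain ⟨e, he⟩ := hWX
  refine monoIn_of_comp_eq_zero fun Y hY a ha => ?_
  have ha' : S.map (a ≫ (e 0 (by omega)).inv) ≫ (((-1 : ℤ) ^ n) • S.map (W.d 0)) = 0 := by
    rw [Preadditive.comp_zsmul, ← S.map_comp, he 0 (by omega)]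
    simp [reassoc_of% ha]
  obtain ⟨k, hk⟩ := h.2 _ _ ha'
  have hk₀ : k = 0 := by
    rw [← Preadditive.IsIso.comp_right_eq_zero _ (e (n + 1) le_rfl).hom]
    exact hHom Y hY _
  rwa [hk₀, zero_comp, S.map_eq_zero_iff, Preadditive.IsIso.comp_right_eq_zero] at hk

lemma epiIn (hWX : Matches n S W X d) (h : IsWeakCokernel (W.d n) W.conn) {P : C → Prop}
    (hHom : ∀ Y, P Y → ∀ f : S.obj (X 0) ⟶ Y, f = 0) : EpiIn P (d n) := by
  obtain ⟨e, he⟩ := hWX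
  refine epiIn_of_comp_eq_zero fun Y hY b hb => ?_
  obtain ⟨k, hk⟩ := h.2 _ ((e (n + 1) le_rfl).hom ≫ b) (by simp [he n (by omega), hb])
  have hk₀ : k = 0 := by
    rw [← Preadditive.IsIso.comp_left_eq_zero (S.map (e 0 (by omega)).inv)]
    exact hHom Y hY _
  rwa [hk₀, comp_zero, Preadditive.IsIso.comp_left_eq_zero] at hk

end Matches

theorem statement_9_general {C : Type u} [Category.{v} C] [Preadditive C] [HasFiniteBiproducts C]
    (n : ℕ) (hn : 1 ≤ n) (e : C ≌ C) [e.functor.Additive]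
    (ANG : Angulation n e.functor)
    (P : C → Prop)
    (hHom : ∀ {A A' : C}, P A → P A' → ∀ f : e.functor.obj A ⟶ A', f = 0) :
    ∀ (X : ℕ → C) (d : ∀ i, X i ⟶ X (i + 1)),
      IsConflation n e.functor P ANG.angles X d → IsNExact n P X d := by
  rintro X d ⟨hP, W, hW, hWX⟩
  exact ⟨hP,
    hWX.monoIn (ANG.isWeakKernel_conn hW) fun _ hY _ => hHom hY (hP _ le_rfl) _,
    hWX.epiIn (ANG.isWeakCokernel_conn hn hW) fun _ hY _ => hHom (hP 0 (by omega)) hY _,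
    fun i hi => (hWX.isWeakCokernel hi (ANG.isWeakCokernel_d_s9 hn hW i)).weakCokernelIn P,
    fun i hi => (hWX.isWeakKernel hi (ANG.isWeakKernel_d hW i)).weakKernelIn P⟩

/-- Let `(F, Σₙ, ⬠)` be an `(n+2)`-angulated Krull–Schmidt category
and `A ⊆ F` a full, additive, `n`-extension closed subcategory with
`Hom(Σₙ A, A) = 0`.  Then every `A`-conflation is an `n`-exact sequence in `A`. -/
theorem statement_9 {C : Type u} [Category.{v} C] [Preadditive C] [HasFiniteBiproducts C]
    (n : ℕ) (hn : 1 ≤ n) (e : C ≌ C) [e.functor.Additive]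
    (ANG : Angulation n e.functor) (hKS : KrullSchmidt C)
    (P : C → Prop) (hAdd : AddClosed P)
    (hExt : ExtClosed n e.functor P ANG.angles)
    (hHom : ∀ {A A' : C}, P A → P A' → ∀ f : e.functor.obj A ⟶ A', f = 0) :
    ∀ (X : ℕ → C) (d : ∀ i, X i ⟶ X (i + 1)),
      IsConflation n e.functor P ANG.angles X d → IsNExact n P X d :=
  statement_9_general n hn e ANG P hHom

end NAng
end
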